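/- arXiv:2206.03172 — 2 statements merged into one kernel-verified Lean document; each statement's English description precedes it below -/
import Mathlib

section
/- Let (g, t) be a construction with split ((g′, t), ics), where CTS(g′, t) = [tr1,…,trn]. Then g = g′ ∪ icg(tr1) ∪ ⋯ ∪ icg(trn); that is, the union of the generator's graph with all induced construction graphs is the whole graph g. -/
namespace RST

/-! ## Type systems -/

/-- A relation (given as a set of pairs) is a partial order on the set `Ty`. -/
def IsPartialOrderOn {U : Type*} (Ty : Set U) (le : Set (U × U)) : Prop :=
  (∀ p ∈ le, p.1 ∈ Ty ∧ p.2 ∈ Ty) ∧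
  (∀ τ ∈ Ty, (τ, τ) ∈ le) ∧
  (∀ a b : U, (a, b) ∈ le → (b, a) ∈ le → a = b) ∧
  (∀ a b c : U, (a, b) ∈ le → (b, c) ∈ le → (a, c) ∈ le)

/-- The subtype closure of `Ty'` in the type system `(Ty, le)`. -/
def subtypeClosure {U : Type*} (Ty : Set U) (le : Set (U × U)) (Ty' : Set U) : Set U :=
  {τ | τ ∈ Ty ∧ ∃ τ' ∈ Ty', (τ, τ') ∈ le}

/-- The set of all subtype closures of subsets of `Ty`. -/
def SC {U : Type*} (Ty : Set U) (le : Set (U × U)) : Set (Set U) :=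
  {S | ∃ Ty' ⊆ Ty, S = subtypeClosure Ty le Ty'}

/-- The candidate order of an upper bound extension: the reflexive closure (on `Ty ∪ Tystar`)
of `le` together with the pairs `(τ, f S)` for `τ ∈ S ∈ SC Ty le`. -/
def upperBoundRel {U : Type*} (Ty Tystar : Set U) (le : Set (U × U)) (f : Set U → U) :
    Set (U × U) :=
  (le ∪ {p : U × U | ∃ S ∈ SC Ty le, p.1 ∈ S ∧ p.2 = f S}) ∪
    {p : U × U | p.1 = p.2 ∧ p.1 ∈ Ty ∪ Tystar}

/-! ## Graphs -/

/-- A (raw) directed labelled bipartite graph: tokens `Tk`, configurators `Cf`, arrows `Arr`,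
incidence, arrow indices and vertex labels all given relationally (as sets of pairs), so that
unions of graphs are componentwise unions. -/
structure PreGraph (V A L : Type*) where
  Tk : Set V
  Cf : Set V
  Arr : Set A
  inc : Set (A × (V × V))
  ia : Set (A × ℕ)
  tl : Set (V × L)
  cl : Set (V × L)

variable {V A L : Type*}

instance : Union (PreGraph V A L) :=
  ⟨fun g h =>
    ⟨g.Tk ∪ h.Tk, g.Cf ∪ h.Cf, g.Arr ∪ h.Arr, g.inc ∪ h.inc, g.ia ∪ h.ia,
      g.tl ∪ h.tl, g.cl ∪ h.cl⟩⟩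

def PreGraph.Subgraph (h g : PreGraph V A L) : Prop :=
  h.Tk ⊆ g.Tk ∧ h.Cf ⊆ g.Cf ∧ h.Arr ⊆ g.Arr ∧ h.inc ⊆ g.inc ∧ h.ia ⊆ g.ia ∧
    h.tl ⊆ g.tl ∧ h.cl ⊆ g.cl

/-- The vertices adjacent to `u` (together with `u`). -/
def PreGraph.adjTo (g : PreGraph V A L) (u : V) : Set V :=
  {u} ∪ {v | ∃ a ∈ g.Arr, (a, (v, u)) ∈ g.inc ∨ (a, (u, v)) ∈ g.inc}

/-- The arrows incident to `u`. -/
def PreGraph.incidentArrows (g : PreGraph V A L) (u : V) : Set A :=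
  {a | a ∈ g.Arr ∧ ∃ v, (a, (v, u)) ∈ g.inc ∨ (a, (u, v)) ∈ g.inc}

/-- The restriction of a graph to given vertex and arrow sets. -/
def PreGraph.restrict (g : PreGraph V A L) (Vs : Set V) (As : Set A) : PreGraph V A L :=
  ⟨g.Tk ∩ Vs, g.Cf ∩ Vs, g.Arr ∩ As, {q | q ∈ g.inc ∧ q.1 ∈ As},
    {q | q ∈ g.ia ∧ q.1 ∈ As}, {q | q ∈ g.tl ∧ q.1 ∈ Vs}, {q | q ∈ g.cl ∧ q.1 ∈ Vs}⟩

/-- The neighbourhood of a vertex `u`. -/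
def PreGraph.Nh (g : PreGraph V A L) (u : V) : PreGraph V A L :=
  g.restrict (g.adjTo u) (g.incidentArrows u)

/-- A set of pairs is (the graph of) a function with domain `D`. -/
def IsFunctionOn {α β : Type*} (R : Set (α × β)) (D : Set α) : Prop :=
  (∀ p ∈ R, p.1 ∈ D) ∧ ∀ x ∈ D, ∃! y, (x, y) ∈ R

/-- A raw graph is a genuine directed labelled bipartite graph. -/
def IsGraph (g : PreGraph V A L) : Prop :=
  Disjoint g.Tk g.Cf ∧
  IsFunctionOn g.inc g.Arr ∧
  (∀ a v w, (a, (v, w)) ∈ g.inc → (v ∈ g.Tk ∧ w ∈ g.Cf) ∨ (v ∈ g.Cf ∧ w ∈ g.Tk)) ∧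
  IsFunctionOn g.ia g.Arr ∧ IsFunctionOn g.tl g.Tk ∧ IsFunctionOn g.cl g.Cf

/-- `ars` is the list of incoming arrows of `u`, listed in increasing index order
(the arrow at position `i` carries index `i+1`). -/
def InArrowSeq (g : PreGraph V A L) (u : V) (ars : List A) : Prop :=
  ars.Nodup ∧ (∀ a : A, a ∈ ars ↔ a ∈ g.Arr ∧ ∃ w, (a, (w, u)) ∈ g.inc) ∧
  ∀ (i : ℕ) (a : A), ars[i]? = some a → (a, i + 1) ∈ g.ia

/-- `t` is an output token of the configurator `u`. -/
def OutputTok (g : PreGraph V A L) (u t : V) : Prop :=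
  ∃ a ∈ g.Arr, (a, (u, t)) ∈ g.inc

/-- `ts` is the input token-sequence of the configurator `u`. -/
def InputTokSeq (g : PreGraph V A L) (u : V) (ts : List V) : Prop :=
  ∃ ars : List A, InArrowSeq g u ars ∧
    List.Forall₂ (fun a v => (a, (v, u)) ∈ g.inc) ars ts

/-- `τs` is the input type-sequence of the configurator `u`. -/
def InputTypeSeq (g : PreGraph V A L) (u : V) (τs : List L) : Prop :=
  ∃ ts : List V, InputTokSeq g u ts ∧ List.Forall₂ (fun v τ => (v, τ) ∈ g.tl) ts τs

/-- `g` is a configuration of the constructor `c` (with signature `(ins, out)`),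
whose single configurator is `u`. -/
def IsConfiguration (le : Set (L × L)) (g : PreGraph V A L) (u : V) (c : L)
    (ins : List L) (out : L) : Prop :=
  IsGraph g ∧ g.Cf = {u} ∧ (u, c) ∈ g.cl ∧
  g.Tk = {v | ∃ a ∈ g.Arr, (a, (v, u)) ∈ g.inc ∨ (a, (u, v)) ∈ g.inc} ∧
  (∃! a0 : A, a0 ∈ g.Arr ∧ ∃ w, (a0, (u, w)) ∈ g.inc) ∧
  (∀ a0 ∈ g.Arr, ∀ w : V, (a0, (u, w)) ∈ g.inc →
      (a0, 0) ∈ g.ia ∧ ∃ σ, (w, σ) ∈ g.tl ∧ (σ, out) ∈ le) ∧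
  (∃ ars : List A, InArrowSeq g u ars ∧ ars.length = ins.length ∧
    ∀ (i : ℕ) (a : A) (τ : L), ars[i]? = some a → ins[i]? = some τ →
      ∃ w σ, (a, (w, u)) ∈ g.inc ∧ (w, σ) ∈ g.tl ∧ (σ, τ) ∈ le)

/-- A structure graph for the constructor specification `(C, sig)` over types `(Ty, le)`. -/
def IsStructureGraph (Ty : Set L) (le : Set (L × L)) (C : Set L)
    (sig : Set (L × (List L × L))) (g : PreGraph V A L) : Prop :=
  IsGraph g ∧ (∀ x τ, (x, τ) ∈ g.tl → τ ∈ Ty) ∧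
  ∀ u ∈ g.Cf, ∃ c ins out, (u, c) ∈ g.cl ∧ c ∈ C ∧ (c, (ins, out)) ∈ sig ∧
    IsConfiguration le (g.Nh u) u c ins out

/-! ## Construction spaces -/

/-- The raw data of a construction space: a type system, a constructor specification and
a structure graph. -/
structure CSpace (V A L : Type*) where
  Ty : Set L
  le : Set (L × L)
  C : Set L
  sig : Set (L × (List L × L))
  G : PreGraph V A L

instance : Union (CSpace V A L) :=
  ⟨fun c d => ⟨c.Ty ∪ d.Ty, c.le ∪ d.le, c.C ∪ d.C, c.sig ∪ d.sig, c.G ∪ d.G⟩⟩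

/-- The raw data forms a genuine construction space. -/
def IsCSpace (Cs : CSpace V A L) : Prop :=
  IsPartialOrderOn Cs.Ty Cs.le ∧ Disjoint Cs.C Cs.Ty ∧ IsFunctionOn Cs.sig Cs.C ∧
  (∀ c ins out, (c, (ins, out)) ∈ Cs.sig →
      ins ≠ [] ∧ (∀ τ ∈ ins, τ ∈ Cs.Ty) ∧ out ∈ Cs.Ty) ∧
  IsStructureGraph Cs.Ty Cs.le Cs.C Cs.sig Cs.G

/-- Token-functionality of the constructors of a structure graph. -/
def TokenFunctional (g : PreGraph V A L) : Prop :=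
  ∀ u u' c, u ∈ g.Cf → u' ∈ g.Cf → (u, c) ∈ g.cl → (u', c) ∈ g.cl →
    ∀ ts, InputTokSeq g u ts → InputTokSeq g u' ts →
      ∀ t t', OutputTok g u t → OutputTok g u' t' → t = t'

/-- Type-functionality of the constructors of a structure graph. -/
def TypeFunctional (g : PreGraph V A L) : Prop :=
  ∀ u u' c, u ∈ g.Cf → u' ∈ g.Cf → (u, c) ∈ g.cl → (u', c) ∈ g.cl →
    ∀ τs, InputTypeSeq g u τs → InputTypeSeq g u' τs →
      ∀ t t' τ τ', OutputTok g u t → OutputTok g u' t' →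
        (t, τ) ∈ g.tl → (t', τ') ∈ g.tl → τ = τ'

def IsFunctionalGraph (g : PreGraph V A L) : Prop :=
  TokenFunctional g ∧ TypeFunctional g

/-! ## Representational systems -/

/-- The raw data of a representational system: grammatical, entailment and identification
spaces. -/
structure RSystem (V A L : Type*) where
  Gs : CSpace V A L
  Es : CSpace V A L
  Is : CSpace V A L

instance : Union (RSystem V A L) :=
  ⟨fun r s => ⟨r.Gs ∪ s.Gs, r.Es ∪ s.Es, r.Is ∪ s.Is⟩⟩

/-- The universal space of a representational system. -/
def RSystem.uspace (R : RSystem V A L) : CSpace V A L := (R.Gs ∪ R.Es) ∪ R.Is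

/-- `R` is a representational system formed over the type system `(Ty, le)` and the
meta-type system `(MTy, Mle)`. -/
def IsRSystem (R : RSystem V A L) (Ty : Set L) (le : Set (L × L))
    (MTy : Set L) (Mle : Set (L × L)) : Prop :=
  IsPartialOrderOn Ty le ∧ IsPartialOrderOn MTy Mle ∧
  IsPartialOrderOn (Ty ∪ MTy) (le ∪ Mle) ∧
  R.Gs.Ty = Ty ∧ R.Gs.le = le ∧ IsCSpace R.Gs ∧ IsFunctionalGraph R.Gs.G ∧
  R.Es.Ty = Ty ∧ R.Es.le = le ∧ IsCSpace R.Es ∧ R.Es.G.Tk ⊆ R.Gs.G.Tk ∧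
  R.Is.Ty = Ty ∪ MTy ∧ R.Is.le = le ∪ Mle ∧ IsCSpace R.Is ∧
  (∀ x ∈ R.Is.G.Tk, x ∉ R.Gs.G.Tk → ∃ τ ∈ MTy, (x, τ) ∈ R.Is.G.tl) ∧
  (∀ x ∈ R.Is.G.Tk, (∃ u ∈ R.Is.G.Cf, OutputTok R.Is.G u x) → x ∉ R.Gs.G.Tk) ∧
  IsCSpace (R.Gs ∪ R.Es) ∧ IsCSpace (R.Gs ∪ R.Is) ∧ IsCSpace (R.Es ∪ R.Is) ∧
  Disjoint R.Gs.C R.Es.C ∧ Disjoint R.Gs.C R.Is.C ∧ Disjoint R.Es.C R.Is.C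

/-- `(R, R', Is'')` is an inter-representational-system encoding, where `R` is formed over
`(Ty, le)` and `(MTy, Mle)`, `R'` over `(Ty', le')` and `(MTy', Mle')`, and `Is''` is an
identification space formed over `(Ty ∪ Ty', le ∪ le')` and `(MTy'', Mle'')`. -/
def IsIRSE (R R' : RSystem V A L) (Is'' : CSpace V A L)
    (Ty : Set L) (le : Set (L × L)) (MTy : Set L) (Mle : Set (L × L))
    (Ty' : Set L) (le' : Set (L × L)) (MTy' : Set L) (Mle' : Set (L × L))
    (MTy'' : Set L) (Mle'' : Set (L × L)) : Prop :=
  IsRSystem R Ty le MTy Mle ∧ IsRSystem R' Ty' le' MTy' Mle' ∧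
  IsRSystem (R ∪ R') (Ty ∪ Ty') (le ∪ le') (MTy ∪ MTy') (Mle ∪ Mle') ∧
  IsPartialOrderOn MTy'' Mle'' ∧
  IsPartialOrderOn ((Ty ∪ Ty') ∪ MTy'') ((le ∪ le') ∪ Mle'') ∧
  Is''.Ty = (Ty ∪ Ty') ∪ MTy'' ∧ Is''.le = (le ∪ le') ∪ Mle'' ∧ IsCSpace Is'' ∧
  MTy ∪ MTy' ⊆ MTy'' ∧ Mle ∪ Mle' ⊆ Mle'' ∧
  (∀ x ∈ Is''.G.Tk, x ∉ (R.Gs ∪ R'.Gs).G.Tk → ∃ τ ∈ MTy'', (x, τ) ∈ Is''.G.tl) ∧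
  (∀ x ∈ Is''.G.Tk, (∃ u ∈ Is''.G.Cf, OutputTok Is''.G u x) →
      x ∉ (R.Gs ∪ R'.Gs).G.Tk) ∧
  IsCSpace ((R.Gs ∪ R'.Gs) ∪ Is'') ∧ IsCSpace ((R.Es ∪ R'.Es) ∪ Is'') ∧
  IsCSpace ((R.Is ∪ R'.Is) ∪ Is'') ∧
  Disjoint Is''.C (R.Gs ∪ R'.Gs).C ∧ Disjoint Is''.C (R.Es ∪ R'.Es).C ∧
  Disjoint Is''.C (R.Is ∪ R'.Is).C

/-! ## Trails -/

/-- A trail candidate: a list of arrows together with an associated source and target vertex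
(needed for the empty trail `[]_v`). -/
structure Trail (V A : Type*) where
  arrows : List A
  src : V
  tgt : V

/-- The empty trail `[]_v`. -/
def Trail.nil {V A : Type*} (v : V) : Trail V A := ⟨[], v, v⟩

/-- Concatenation `e ⊕ w` of trails. -/
def Trail.append {V A : Type*} (e w : Trail V A) : Trail V A :=
  ⟨e.arrows ++ w.arrows, e.src, w.tgt⟩

/-- The image of a trail under vertex/arrow maps. -/
def Trail.map {V A : Type*} (fv : V → V) (fa : A → A) (tr : Trail V A) : Trail V A :=
  ⟨tr.arrows.map fa, fv tr.src, fv tr.tgt⟩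

/-- The arrows chain through the graph from `s` to `t`. -/
def ChainIn (g : PreGraph V A L) : List A → V → V → Prop
  | [], s, t => s = t
  | a :: rest, s, t => a ∈ g.Arr ∧ ∃ m, (a, (s, m)) ∈ g.inc ∧ ChainIn g rest m t

/-- `tr` is a trail in `g`. -/
def IsTrailIn (g : PreGraph V A L) (tr : Trail V A) : Prop :=
  tr.arrows.Nodup ∧ ChainIn g tr.arrows tr.src tr.tgt ∧
  tr.src ∈ g.Tk ∪ g.Cf ∧ tr.tgt ∈ g.Tk ∪ g.Cf

/-- A trail is well-formed provided its source and target are tokens. -/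
def WellFormed (g : PreGraph V A L) (tr : Trail V A) : Prop :=
  tr.src ∈ g.Tk ∧ tr.tgt ∈ g.Tk

/-- `tr` is (source-)extendable by the arrow `a`. -/
def ExtendableBy (g : PreGraph V A L) (tr : Trail V A) (a : A) : Prop :=
  a ∈ g.Arr ∧ a ∉ tr.arrows ∧ ∃ s, (a, (s, tr.src)) ∈ g.inc

def Extendable (g : PreGraph V A L) (tr : Trail V A) : Prop :=
  ∃ a, ExtendableBy g tr a

def NonExtendable (g : PreGraph V A L) (tr : Trail V A) : Prop :=
  ¬ Extendable g tr

/-- `TES g tr S` holds iff `S` is the trail extension sequence of the trail `tr` in `g`,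
following the recursive definition of TES. -/
inductive TES (g : PreGraph V A L) : Trail V A → List (Trail V A) → Prop where
  | nonext (tr : Trail V A) (h : NonExtendable g tr) :
      TES g tr [⟨[], tr.src, tr.src⟩]
  | ext (tr : Trail V A) (a : A) (u : V) (ars : List A)
      (Ss : List (List (Trail V A)))
      (hext : ExtendableBy g tr a)
      (hinc : (a, (u, tr.src)) ∈ g.inc)
      (hars : InArrowSeq g u ars)
      (hlen : Ss.length = ars.length)
      (hrec : ∀ (i : ℕ) (ai : A) (si : V) (Si : List (Trail V A)),
          ars[i]? = some ai → Ss[i]? = some Si → (ai, (si, u)) ∈ g.inc →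
          TES g ⟨ai :: a :: tr.arrows, si, tr.tgt⟩ Si) :
      TES g tr (List.flatten (List.zipWith
        (fun (ai : A) (Si : List (Trail V A)) =>
          Si.map (fun e => (⟨e.arrows ++ [ai, a], e.src, tr.src⟩ : Trail V A)))
        ars Ss))

/-- The sequence of sources of a sequence of trails. -/
def srcSeq {V A : Type*} (S : List (Trail V A)) : List V := S.map Trail.src

/-- The right product `S ◁ w`, appending the trail `w` to each trail in `S`. -/
def rprod {V A : Type*} (S : List (Trail V A)) (w : Trail V A) : List (Trail V A) :=
  S.map fun e => e.append w

/-! ## Constructions -/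

/-- Every token is the target of at most one arrow. -/
def UniStructured (g : PreGraph V A L) : Prop :=
  ∀ x ∈ g.Tk, ∀ a ∈ g.Arr, ∀ b ∈ g.Arr,
    (∃ w, (a, (w, x)) ∈ g.inc) → (∃ w, (b, (w, x)) ∈ g.inc) → a = b

/-- `(g, t)` is a construction in the construction space `Cs`: `g` is a finite uni-structured
structure graph (a subgraph of the structure graph of `Cs`), `t` is a token of `g`, and every
vertex of `g` is the source of a trail targeting `t`. -/
def IsConstruction (Cs : CSpace V A L) (g : PreGraph V A L) (t : V) : Prop :=
  g.Subgraph Cs.G ∧ IsStructureGraph Cs.Ty Cs.le Cs.C Cs.sig g ∧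
  g.Tk.Finite ∧ g.Cf.Finite ∧ g.Arr.Finite ∧ UniStructured g ∧ t ∈ g.Tk ∧
  ∀ v ∈ g.Tk ∪ g.Cf, ∃ tr : Trail V A, IsTrailIn g tr ∧ tr.src = v ∧ tr.tgt = t

/-- `(g, t)` is a construction *in* `Cs` in the strong sense: moreover every configurator of `g`
has its full neighbourhood from the structure graph of `Cs`. -/
def IsConstructionIn (Cs : CSpace V A L) (g : PreGraph V A L) (t : V) : Prop :=
  IsConstruction Cs g t ∧ ∀ u ∈ g.Cf, g.Nh u = Cs.G.Nh u

/-- A trivial construction: the construct is its only vertex. -/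
def TrivialC (g : PreGraph V A L) (t : V) : Prop := g.Tk ∪ g.Cf = {t}

/-- A basic construction: exactly one configurator. -/
def BasicC (g : PreGraph V A L) : Prop := ∃ u, g.Cf = {u}

/-- The set of arrows occurring in a sequence of trails. -/
def trailArrowSet {V A : Type*} (TR : List (Trail V A)) : Set A :=
  {a | ∃ tr ∈ TR, a ∈ tr.arrows}

/-- The vertices of the `TR`-graph: vertices incident to arrows of trails of `TR`,
together with the associated vertex of any empty trail of `TR`. -/
def trailVertexSet (g : PreGraph V A L) (TR : List (Trail V A)) : Set V :=
  {v | (∃ a ∈ trailArrowSet TR, ∃ w, (a, (v, w)) ∈ g.inc ∨ (a, (w, v)) ∈ g.inc) ∨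
    ∃ tr ∈ TR, tr.arrows = [] ∧ tr.src = v}

/-- The `TR`-graph `v(TR)`. -/
def trGraph (g : PreGraph V A L) (TR : List (Trail V A)) : PreGraph V A L :=
  g.restrict (trailVertexSet g TR) (trailArrowSet TR)

/-- `((g', t), ics)` is a split of the construction `(g, t)`: `(g', t)` is a generator and
`ics` is the corresponding induced construction sequence (each induced construction is
`(v(TES(tri)), source(tri))`, the TES being computed in `(g, t)`). -/
def IsSplit (Cs : CSpace V A L) (g : PreGraph V A L) (t : V)
    (g' : PreGraph V A L) (ics : List (PreGraph V A L × V)) : Prop :=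
  IsConstruction Cs g' t ∧ g'.Subgraph g ∧
  ∃ trs : List (Trail V A), TES g' (Trail.nil t) trs ∧ ics.length = trs.length ∧
    ∀ (i : ℕ) (tri : Trail V A), trs[i]? = some tri →
      ∃ Si : List (Trail V A), TES g tri Si ∧ ics[i]? = some (trGraph g Si, tri.src)

/-! ## Decompositions -/

/-- A decomposition tree: vertices labelled by a graph and a token, with the incoming arrows
of every vertex given in index order by a list of subtrees. -/
inductive DTree (V A L : Type*) where
  | node : PreGraph V A L → V → List (DTree V A L) → DTree V A L

def DTree.rootGraph : DTree V A L → PreGraph V A L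
  | .node g _ _ => g

def DTree.rootTok : DTree V A L → V
  | .node _ t _ => t

def DTree.kids : DTree V A L → List (DTree V A L)
  | .node _ _ cs => cs

/-- `IsDecompositionOf Cs D g t` holds iff `D` is a decomposition of the construction
`(g, t)` in `Cs`. -/
inductive IsDecompositionOf (Cs : CSpace V A L) : DTree V A L → PreGraph V A L → V → Prop where
  | single (g : PreGraph V A L) (t : V) (h : IsConstruction Cs g t) :
      IsDecompositionOf Cs (.node g t []) g t
  | split (g : PreGraph V A L) (t : V) (g' : PreGraph V A L)
      (ics : List (PreGraph V A L × V)) (cs : List (DTree V A L))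
      (hc : IsConstruction Cs g t)
      (hsplit : IsSplit Cs g t g' ics)
      (hlen : cs.length = ics.length)
      (hrec : ∀ (i : ℕ) (ci : DTree V A L) (gi : PreGraph V A L) (ti : V),
          cs[i]? = some ci → ics[i]? = some (gi, ti) → IsDecompositionOf Cs ci gi ti) :
      IsDecompositionOf Cs (.node g' t cs) g t

/-- `LcsRel D ls` holds iff `ls` is the leaf construction-sequence of `D`. -/
inductive LcsRel : DTree V A L → List (PreGraph V A L × V) → Prop where
  | leaf (g : PreGraph V A L) (t : V) : LcsRel (.node g t []) [(g, t)]
  | node (g : PreGraph V A L) (t : V) (cs : List (DTree V A L))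
      (ls : List (List (PreGraph V A L × V)))
      (hne : cs ≠ []) (hlen : ls.length = cs.length)
      (h : ∀ (i : ℕ) (ci : DTree V A L) (li : List (PreGraph V A L × V)),
          cs[i]? = some ci → ls[i]? = some li → LcsRel ci li) :
      LcsRel (.node g t cs) ls.flatten

/-- `(p, w)` is one of the constructions labelling a vertex of the decomposition tree. -/
inductive LabelOf : DTree V A L → PreGraph V A L → V → Prop where
  | root (g : PreGraph V A L) (t : V) (cs : List (DTree V A L)) :
      LabelOf (.node g t cs) g t
  | child (g : PreGraph V A L) (t : V) (cs : List (DTree V A L))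
      (c : DTree V A L) (p : PreGraph V A L) (w : V) :
      c ∈ cs → LabelOf c p w → LabelOf (.node g t cs) p w

/-- The union of all the graphs labelling vertices of the decomposition tree
(the graph of the construction `ct(D)` of the decomposition `D`). -/
def DTree.ctGraph (D : DTree V A L) : PreGraph V A L :=
  ⟨{x | ∃ p w, LabelOf D p w ∧ x ∈ p.Tk},
   {x | ∃ p w, LabelOf D p w ∧ x ∈ p.Cf},
   {a | ∃ p w, LabelOf D p w ∧ a ∈ p.Arr},
   {q | ∃ p w, LabelOf D p w ∧ q ∈ p.inc},
   {q | ∃ p w, LabelOf D p w ∧ q ∈ p.ia},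
   {q | ∃ p w, LabelOf D p w ∧ q ∈ p.tl},
   {q | ∃ p w, LabelOf D p w ∧ q ∈ p.cl}⟩

/-- Every vertex label of the decomposition tree satisfies `P`. -/
inductive AllLabels (P : PreGraph V A L → V → Prop) : DTree V A L → Prop where
  | node (g : PreGraph V A L) (t : V) (cs : List (DTree V A L)) :
      P g t → (∀ c, c ∈ cs → AllLabels P c) → AllLabels P (.node g t cs)

/-- The subtree of a decomposition tree at a given position (a path of child indices). -/
def subtreeAt : List ℕ → DTree V A L → Option (DTree V A L)
  | [], D => some D
  | i :: rest, .node _ _ cs =>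
    match cs[i]? with
    | some c => subtreeAt rest c
    | none => none

/-! ## Patterns and embeddings -/

/-- An embedding of the graph `g` into the graph `p`: an isomorphism preserving arrow indices
and configurator labels, with token labels respecting the subtype relation `le`. -/
def IsEmbedding (le : Set (L × L)) (g p : PreGraph V A L) (fv : V → V) (fa : A → A) : Prop :=
  (∀ x ∈ g.Tk, fv x ∈ p.Tk) ∧ (∀ x ∈ g.Cf, fv x ∈ p.Cf) ∧
  (∀ x ∈ g.Tk ∪ g.Cf, ∀ y ∈ g.Tk ∪ g.Cf, fv x = fv y → x = y) ∧
  (∀ y ∈ p.Tk, ∃ x ∈ g.Tk, fv x = y) ∧ (∀ y ∈ p.Cf, ∃ x ∈ g.Cf, fv x = y) ∧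
  (∀ a ∈ g.Arr, fa a ∈ p.Arr) ∧
  (∀ a ∈ g.Arr, ∀ b ∈ g.Arr, fa a = fa b → a = b) ∧
  (∀ b ∈ p.Arr, ∃ a ∈ g.Arr, fa a = b) ∧
  (∀ a v w, (a, (v, w)) ∈ g.inc → (fa a, (fv v, fv w)) ∈ p.inc) ∧
  (∀ a n, (a, n) ∈ g.ia → (fa a, n) ∈ p.ia) ∧
  (∀ u c, (u, c) ∈ g.cl → (fv u, c) ∈ p.cl) ∧
  (∀ x τ, (x, τ) ∈ g.tl → ∃ σ, (fv x, σ) ∈ p.tl ∧ (τ, σ) ∈ le)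

/-- The construction `(g, t)` matches the pattern `(p, v)`. -/
def MatchesPattern (le : Set (L × L)) (g : PreGraph V A L) (t : V)
    (p : PreGraph V A L) (v : V) : Prop :=
  ∃ fv fa, IsEmbedding le g p fv fa ∧ fv t = v

/-- `Ps` is a pattern space for `Cs`: a construction space over the same type system and
constructor specification such that every construction of `Cs` matches some construction
of `Ps`. -/
def IsPatternSpace (Cs Ps : CSpace V A L) : Prop :=
  Ps.Ty = Cs.Ty ∧ Ps.le = Cs.le ∧ Ps.C = Cs.C ∧ Ps.sig = Cs.sig ∧ IsCSpace Ps ∧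
  ∀ g t, IsConstruction Cs g t →
    ∃ p v, IsConstruction Ps p v ∧ MatchesPattern Cs.le g t p v

/-- Vertex-wise matching of two same-shape decomposition trees under a common pair of maps. -/
inductive DMatches (le : Set (L × L)) (fv : V → V) (fa : A → A) :
    DTree V A L → DTree V A L → Prop where
  | node (g : PreGraph V A L) (t : V) (p : PreGraph V A L) (v : V)
      (cs ds : List (DTree V A L))
      (hemb : IsEmbedding le g p fv fa) (ht : fv t = v)
      (hlen : cs.length = ds.length)
      (hrec : ∀ (i : ℕ) (ci di : DTree V A L), cs[i]? = some ci → ds[i]? = some di →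
          DMatches le fv fa ci di) :
      DMatches le fv fa (.node g t cs) (.node p v ds)

/-- The decomposition `D` matches the (pattern) decomposition `Δ`: there is an arrow-index
preserving isomorphism of trees together with an embedding of `ct(D)` into `ct(Δ)` whose
restriction to each vertex label is an embedding into the corresponding pattern label. -/
def DecompositionMatches (le : Set (L × L)) (D Δ : DTree V A L) : Prop :=
  ∃ fv fa, IsEmbedding le D.ctGraph Δ.ctGraph fv fa ∧ fv D.rootTok = Δ.rootTok ∧
    DMatches le fv fa D Δ

/-! ## Descriptions -/

/-- A description: a set of decompositions of patterns (constructions in the pattern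
space `Ps`). -/
def IsDescriptionOf (Ps : CSpace V A L) (Ds : Set (DTree V A L)) : Prop :=
  ∀ Δ ∈ Ds, ∃ p v, IsConstruction Ps p v ∧ IsDecompositionOf Ps Δ p v

/-- The description `Ds` is complete for `Cs`. -/
def CompleteDescription (Cs : CSpace V A L) (Ds : Set (DTree V A L)) : Prop :=
  ∀ g t, IsConstruction Cs g t →
    ∃ Δ ∈ Ds, ∃ D, IsDecompositionOf Cs D g t ∧ DecompositionMatches Cs.le D Δ

/-- The set of patterns labelling vertices of decompositions in `Ds`. -/
def PatternsOf (Ds : Set (DTree V A L)) : Set (PreGraph V A L × V) :=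
  {pv | ∃ Δ ∈ Ds, LabelOf Δ pv.1 pv.2}

/-- Label-preserving isomorphism of patterns/constructions. -/
def LabelIsomorphic (g : PreGraph V A L) (t : V) (p : PreGraph V A L) (v : V) : Prop :=
  ∃ fv fa, IsEmbedding {q : L × L | q.1 = q.2} g p fv fa ∧ fv t = v

/-- The description `Ds` is compact: finitely many patterns up to label-preserving
isomorphism. -/
def CompactDescription (Ds : Set (DTree V A L)) : Prop :=
  ∃ Reps : Set (PreGraph V A L × V), Reps.Finite ∧
    ∀ pv ∈ PatternsOf Ds, ∃ qw ∈ Reps, LabelIsomorphic pv.1 pv.2 qw.1 qw.2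

/-! ## Transformation constraints and structural transformations -/

/-- A transformation-constraint-shaped triple: two patterns (or constructions) together with
a set of patterns (or constructions). -/
structure TConstraint (V A L : Type*) where
  pa : PreGraph V A L
  ca : V
  pb : PreGraph V A L
  cb : V
  Pc : Set (PreGraph V A L × V)

/-- The union of the graphs of a set of patterns. -/
def pGraph (P : Set (PreGraph V A L × V)) : PreGraph V A L :=
  ⟨{x | ∃ pv ∈ P, x ∈ pv.1.Tk}, {x | ∃ pv ∈ P, x ∈ pv.1.Cf},
   {a | ∃ pv ∈ P, a ∈ pv.1.Arr}, {q | ∃ pv ∈ P, q ∈ pv.1.inc},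
   {q | ∃ pv ∈ P, q ∈ pv.1.ia}, {q | ∃ pv ∈ P, q ∈ pv.1.tl},
   {q | ∃ pv ∈ P, q ∈ pv.1.cl}⟩

/-- A respectful embedding of the set of patterns `P` into the set of patterns `P'`. -/
def RespectfulEmbedding (le : Set (L × L)) (P P' : Set (PreGraph V A L × V))
    (fv : V → V) (fa : A → A) : Prop :=
  IsEmbedding le (pGraph P) (pGraph P') fv fa ∧
  ∀ pv ∈ P, ∃ qw ∈ P', IsEmbedding le pv.1 qw.1 fv fa ∧ fv pv.2 = qw.2

/-- Satisfaction of one transformation-constraint-shaped triple by another: embeddings of the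
first two components, a respectful embedding of the third, whose common underlying maps give
an isomorphism of the unions of the graphs. -/
def TCSatisfies (le : Set (L × L)) (s s' : TConstraint V A L) : Prop :=
  ∃ fv fa,
    IsEmbedding le s.pa s'.pa fv fa ∧ fv s.ca = s'.ca ∧
    IsEmbedding le s.pb s'.pb fv fa ∧ fv s.cb = s'.cb ∧
    RespectfulEmbedding le s.Pc s'.Pc fv fa ∧
    IsEmbedding le ((s.pa ∪ s.pb) ∪ pGraph s.Pc) ((s'.pa ∪ s'.pb) ∪ pGraph s'.Pc) fv fa

/-- A transformation constraint for an encoding described by `(Ds, Ds', P'')`. -/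
def IsTransformationConstraint (Ds Ds' : Set (DTree V A L))
    (P'' : Set (PreGraph V A L × V)) (s : TConstraint V A L) : Prop :=
  (s.pa, s.ca) ∈ PatternsOf Ds ∧ (s.pb, s.cb) ∈ PatternsOf Ds' ∧ s.Pc ⊆ P''

/-- A constraint assignment for `Δ` and `Δ'`: a partial function (modelled with `Option`) on
pairs of vertices (paths) whose values are transformation constraints from `S0` matched by the
corresponding labels. -/
def IsConstraintAssignment (leR leR' : Set (L × L)) (S0 : Set (TConstraint V A L))
    (Δ Δ' : DTree V A L) (Lm : List ℕ → List ℕ → Option (TConstraint V A L)) : Prop :=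
  ∀ pi pi' s, Lm pi pi' = some s → s ∈ S0 ∧
    (∃ δ, subtreeAt pi Δ = some δ ∧
        MatchesPattern leR δ.rootGraph δ.rootTok s.pa s.ca) ∧
    (∃ δ', subtreeAt pi' Δ' = some δ' ∧
        MatchesPattern leR' δ'.rootGraph δ'.rootTok s.pb s.cb)

/-- The constraint assignment `Lm` is satisfied by the pair of decompositions `(D, D')`
(whose vertices correspond, via the shape-preserving matchings, to those of `Δ`, `Δ'`). -/
def LSatisfiedBy (leI : Set (L × L)) (Ip : CSpace V A L)
    (Lm : List ℕ → List ℕ → Option (TConstraint V A L)) (D D' : DTree V A L) : Prop :=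
  ∀ pi pi' s d d', Lm pi pi' = some s →
    subtreeAt pi D = some d → subtreeAt pi' D' = some d' →
    ∃ Cset : Set (PreGraph V A L × V),
      (∀ pv ∈ Cset, IsConstruction Ip pv.1 pv.2) ∧
      TCSatisfies leI ⟨d.rootGraph, d.rootTok, d'.rootGraph, d'.rootTok, Cset⟩ s

/-- `(g', t')` is a structural `L`-transformation of `(g, t)` (with respect to the pattern
decompositions `Δ`, `Δ'` for the universal spaces `Ru`, `Ru'` and the inter-property
identification space `Ip`). -/
def IsStructuralLTransformation (Ru Ru' Ip : CSpace V A L) (Δ Δ' : DTree V A L)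
    (Lm : List ℕ → List ℕ → Option (TConstraint V A L))
    (g : PreGraph V A L) (t : V) (g' : PreGraph V A L) (t' : V) : Prop :=
  (∃ D, IsDecompositionOf Ru D g t ∧ DecompositionMatches Ru.le D Δ) ∧
  (∃ D', IsDecompositionOf Ru' D' g' t' ∧ DecompositionMatches Ru'.le D' Δ') ∧
  ∀ D D', IsDecompositionOf Ru D g t → DecompositionMatches Ru.le D Δ →
    IsDecompositionOf Ru' D' g' t' → DecompositionMatches Ru'.le D' Δ' →
    LSatisfiedBy Ip.le Ip Lm D D'

/-- Partial satisfaction: the constraint is only checked at vertices of the pattern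
decomposition `Δh` whose label is already a construction in `Ru'`. -/
def LPartialSatisfiedBy (leI : Set (L × L)) (Ip Ru' : CSpace V A L)
    (Lm : List ℕ → List ℕ → Option (TConstraint V A L)) (D Δh : DTree V A L) : Prop :=
  ∀ pi pi' s d δh, Lm pi pi' = some s →
    subtreeAt pi D = some d → subtreeAt pi' Δh = some δh →
    IsConstructionIn Ru' δh.rootGraph δh.rootTok →
    ∃ Cset : Set (PreGraph V A L × V),
      (∀ pv ∈ Cset, IsConstruction Ip pv.1 pv.2) ∧
      TCSatisfies leI ⟨d.rootGraph, d.rootTok, δh.rootGraph, δh.rootTok, Cset⟩ s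

/-- The pattern `(ph, vh)` (a construction in the pattern space `Ps'` for `Ru'`) is a partial
`L`-transformation of the construction `(g, t)`. -/
def IsPartialLTransformation (Ru Ru' Ip Ps' : CSpace V A L) (Δ Δ' : DTree V A L)
    (Lm : List ℕ → List ℕ → Option (TConstraint V A L))
    (g : PreGraph V A L) (t : V) (ph : PreGraph V A L) (vh : V) : Prop :=
  (∃ D, IsDecompositionOf Ru D g t ∧ DecompositionMatches Ru.le D Δ) ∧
  (∃ Δh, IsDecompositionOf Ps' Δh ph vh ∧ DecompositionMatches Ru'.le Δh Δ') ∧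
  ∀ D Δh, IsDecompositionOf Ru D g t → DecompositionMatches Ru.le D Δ →
    IsDecompositionOf Ps' Δh ph vh → DecompositionMatches Ru'.le Δh Δ' →
    LPartialSatisfiedBy Ip.le Ip Ru' Lm D Δh

/-! ## Validity, soundness, leaf instantiation -/

/-- Validity of `Lm` for `(g, t)` and `(p, v)` at the pair of vertices `(pi, pi')`. -/
def ValidAt (Ru Ru' Ip Ps' : CSpace V A L) (Δ Δ' : DTree V A L)
    (Lm : List ℕ → List ℕ → Option (TConstraint V A L))
    (g : PreGraph V A L) (t : V) (p : PreGraph V A L) (v : V)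
    (pi pi' : List ℕ) : Prop :=
  ∀ D Δh Dsub Δhsub Δsub Δsub',
    IsDecompositionOf Ru D g t → DecompositionMatches Ru.le D Δ →
    IsDecompositionOf Ps' Δh p v → DecompositionMatches Ru'.le Δh Δ' →
    subtreeAt pi D = some Dsub → subtreeAt pi' Δh = some Δhsub →
    subtreeAt pi Δ = some Δsub → subtreeAt pi' Δ' = some Δsub' →
    IsConstructionIn Ru' Δhsub.ctGraph Δhsub.rootTok →
    IsStructuralLTransformation Ru Ru' Ip Δsub Δsub'
      (fun σ σ' => Lm (pi ++ σ) (pi' ++ σ'))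
      Dsub.ctGraph Dsub.rootTok Δhsub.ctGraph Δhsub.rootTok

/-- Ancestor-validity: validity at every pair of proper descendants-in-the-tree
("ancestors" in the paper's in-tree terminology). -/
def AncestorValidAt (Ru Ru' Ip Ps' : CSpace V A L) (Δ Δ' : DTree V A L)
    (Lm : List ℕ → List ℕ → Option (TConstraint V A L))
    (g : PreGraph V A L) (t : V) (p : PreGraph V A L) (v : V)
    (pi pi' : List ℕ) : Prop :=
  ∀ σ σ' : List ℕ, σ ≠ [] → σ' ≠ [] →
    (∃ d, subtreeAt (pi ++ σ) Δ = some d) → (∃ d', subtreeAt (pi' ++ σ') Δ' = some d') →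
    ValidAt Ru Ru' Ip Ps' Δ Δ' Lm g t p v (pi ++ σ) (pi' ++ σ')

/-- Soundness of a constraint assignment. -/
def SoundAssignment (Ru Ru' Ip Ps' : CSpace V A L) (Δ Δ' : DTree V A L)
    (Lm : List ℕ → List ℕ → Option (TConstraint V A L)) : Prop :=
  ∀ g t, IsConstructionIn Ru g t →
    (∃ D, IsDecompositionOf Ru D g t ∧ DecompositionMatches Ru.le D Δ) →
    ∀ p v, IsConstruction Ps' p v →
      (∃ Δh, IsDecompositionOf Ps' Δh p v ∧ DecompositionMatches Ru'.le Δh Δ') →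
      ∀ pi pi', (∃ d, subtreeAt pi Δ = some d) → (∃ d', subtreeAt pi' Δ' = some d') →
        AncestorValidAt Ru Ru' Ip Ps' Δ Δ' Lm g t p v pi pi' →
        ValidAt Ru Ru' Ip Ps' Δ Δ' Lm g t p v pi pi'

/-- The pattern `(p, v)` leaf-instantiates `Δ'`: it matches `Δ'` and every leaf of its
`Δ'`-canonical decomposition is labelled by a construction in `Ru'`. -/
def LeafInstantiates (Ru' Ps' : CSpace V A L) (Δ' : DTree V A L)
    (p : PreGraph V A L) (v : V) : Prop :=
  (∃ Δh, IsDecompositionOf Ps' Δh p v ∧ DecompositionMatches Ru'.le Δh Δ') ∧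
  ∀ Δh, IsDecompositionOf Ps' Δh p v → DecompositionMatches Ru'.le Δh Δ' →
    ∀ pi δh, subtreeAt pi Δh = some δh → δh.kids = [] →
      IsConstructionIn Ru' δh.rootGraph δh.rootTok

/-- A complete extension of a pattern `(p, v)` that leaf-instantiates `Δ'`. -/
def CompleteExtension (Ru' Ps' : CSpace V A L) (Δ' : DTree V A L)
    (p : PreGraph V A L) (v : V) (g' : PreGraph V A L) (t' : V) : Prop :=
  IsConstructionIn Ru' g' t' ∧
  ∃ fv fa, IsEmbedding Ru'.le g' p fv fa ∧ fv t' = v ∧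
    ∀ Δh, IsDecompositionOf Ps' Δh p v → DecompositionMatches Ru'.le Δh Δ' →
      ∀ pi δh, subtreeAt pi Δh = some δh → δh.kids = [] →
        ∀ x ∈ δh.rootGraph.Tk, x ∈ g'.Tk ∧ fv x = x

/-- `(g, t)` and `(p, v)` are valid at the leaves of `Δ` and `Δ'`. -/
def ValidAtLeaves (Ru Ru' Ip Ps' : CSpace V A L) (Δ Δ' : DTree V A L)
    (Lm : List ℕ → List ℕ → Option (TConstraint V A L))
    (g : PreGraph V A L) (t : V) (p : PreGraph V A L) (v : V) : Prop :=
  ∀ pi pi' δ δ', subtreeAt pi Δ = some δ → subtreeAt pi' Δ' = some δ' →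
    δ.kids = [] → δ'.kids = [] →
    ValidAt Ru Ru' Ip Ps' Δ Δ' Lm g t p v pi pi'


/-! Every arrow of `g` lies on a repetition-free chain ending at `t`. Cutting such a chain at
its arrows in `g'` leaves pieces that avoid `g'` but end at a vertex `m` of `g'`. An arrow of `g`
entering `g'` at `m` from outside forces `m` to be a token without inputs in `g'`: a configurator
keeps all its inputs (their number is fixed by its signature) and a token has only one. So `m` is
the source of a trail `tri` of `CTS(g', t)`, and the piece is the tail of a trail of
`TES_g(tri)`. Vertices are covered through their outgoing arrows, and incidences and labels
follow by functionality. -/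

section SplitCover

variable {g g' : PreGraph V A L}

theorem IsFunctionOn.eq_of_mem {α β : Type*} {R : Set (α × β)} {D : Set α}
    (hR : IsFunctionOn R D) {x : α} {y y' : β} (hy : (x, y) ∈ R) (hy' : (x, y') ∈ R) :
    y = y' := by
  obtain ⟨z, -, hz⟩ := hR.2 x (hR.1 _ hy)
  rw [hz y hy, hz y' hy']

theorem IsFunctionOn.mem_of_subset {α β : Type*} {R R' : Set (α × β)} {D D' : Set α}
    (hR : IsFunctionOn R D) (hR' : IsFunctionOn R' D') (hsub : R' ⊆ R)
    {q : α × β} (hq : q ∈ R) (hq' : q.1 ∈ D') : q ∈ R' := by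
  obtain ⟨y, hy, -⟩ := hR'.2 q.1 hq'
  rwa [← hR.eq_of_mem hq (hsub hy)] at hy

theorem exists_getElem?_of_mem_of_length_eq {α β : Type*} {l : List α} {l' : List β}
    (hlen : l'.length = l.length) {x : α} (hx : x ∈ l) :
    ∃ (i : ℕ) (y : β), l[i]? = some x ∧ l'[i]? = some y := by
  obtain ⟨i, hi⟩ := List.mem_iff_getElem?.1 hx
  have hil : i < l'.length := hlen ▸ (List.getElem?_eq_some_iff.1 hi).1
  exact ⟨i, l'[i], hi, List.getElem?_eq_getElem hil⟩

@[ext]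
theorem PreGraph.ext {h : PreGraph V A L} (hTk : g.Tk = h.Tk) (hCf : g.Cf = h.Cf)
    (hArr : g.Arr = h.Arr) (hinc : g.inc = h.inc) (hia : g.ia = h.ia) (htl : g.tl = h.tl)
    (hcl : g.cl = h.cl) : g = h := by
  cases g; cases h; congr

theorem PreGraph.restrict_union_restrict (g : PreGraph V A L) (Vs Vs' : Set V)
    (As As' : Set A) :
    g.restrict Vs As ∪ g.restrict Vs' As' = g.restrict (Vs ∪ Vs') (As ∪ As') := by
  ext <;> simp only [PreGraph.restrict, Union.union, Set.union, Set.mem_ofPred_eq,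
    Set.mem_inter_iff] <;> tauto

theorem PreGraph.foldl_union_restrict {ι : Type*} (g : PreGraph V A L) (Vf : ι → Set V)
    (Af : ι → Set A) (xs : List ι) (Vs : Set V) (As : Set A) :
    (xs.map fun x => g.restrict (Vf x) (Af x)).foldl (· ∪ ·) (g.restrict Vs As) =
      g.restrict (Vs ∪ ⋃ x ∈ xs, Vf x) (As ∪ ⋃ x ∈ xs, Af x) := by
  induction xs generalizing Vs As with
  | nil => simp
  | cons x xs ih =>
    simp only [List.map_cons, List.foldl_cons, restrict_union_restrict, ih,
      List.mem_cons, Set.iUnion_iUnion_eq_or_left, Set.union_assoc]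

theorem IsGraph.inc_unique (hg : IsGraph g) {a : A} {p q : V × V}
    (hp : (a, p) ∈ g.inc) (hq : (a, q) ∈ g.inc) : p = q :=
  hg.2.1.eq_of_mem hp hq

theorem IsGraph.src_mem (hg : IsGraph g) {a : A} {v w : V} (hinc : (a, (v, w)) ∈ g.inc) :
    v ∈ g.Tk ∪ g.Cf := by
  rcases hg.2.2.1 a v w hinc with ⟨hv, -⟩ | ⟨hv, -⟩
  exacts [Or.inl hv, Or.inr hv]

theorem IsGraph.tgt_mem (hg : IsGraph g) {a : A} {v w : V} (hinc : (a, (v, w)) ∈ g.inc) :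
    w ∈ g.Tk ∪ g.Cf := by
  rcases hg.2.2.1 a v w hinc with ⟨-, hw⟩ | ⟨-, hw⟩
  exacts [Or.inr hw, Or.inl hw]

theorem IsGraph.src_mem_cf_of_tgt_mem_tk (hg : IsGraph g) {a : A} {v w : V}
    (hinc : (a, (v, w)) ∈ g.inc) (hw : w ∈ g.Tk) : v ∈ g.Cf := by
  rcases hg.2.2.1 a v w hinc with ⟨-, hw'⟩ | ⟨hv, -⟩
  exacts [(Set.disjoint_left.1 hg.1 hw hw').elim, hv]

theorem IsGraph.src_mem_tk_of_tgt_mem_cf (hg : IsGraph g) {a : A} {v w : V}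
    (hinc : (a, (v, w)) ∈ g.inc) (hw : w ∈ g.Cf) : v ∈ g.Tk := by
  rcases hg.2.2.1 a v w hinc with ⟨hv, -⟩ | ⟨-, hw'⟩
  exacts [hv, (Set.disjoint_left.1 hg.1 hw' hw).elim]

theorem IsGraph.mem_inc_of_subgraph (hg : IsGraph g) (hg' : IsGraph g') (hsub : g'.Subgraph g)
    {a : A} {p : V × V} (ha : a ∈ g'.Arr) (hinc : (a, p) ∈ g.inc) : (a, p) ∈ g'.inc :=
  hg.2.1.mem_of_subset hg'.2.1 hsub.2.2.2.1 hinc ha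

theorem IsGraph.restrict_eq_self (hg : IsGraph g) {Vs : Set V} {As : Set A}
    (hV : g.Tk ∪ g.Cf ⊆ Vs) (hA : g.Arr ⊆ As) : g.restrict Vs As = g := by
  obtain ⟨-, hinc, -, hia, htl, hcl⟩ := hg
  ext q <;> simp only [PreGraph.restrict, Set.mem_inter_iff, Set.mem_ofPred_eq,
    and_iff_left_iff_imp]
  exacts [fun h => hV (Or.inl h), fun h => hV (Or.inr h), fun h => hA h,
    fun h => hA (hinc.1 q h), fun h => hA (hia.1 q h), fun h => hV (Or.inl (htl.1 q h)),
    fun h => hV (Or.inr (hcl.1 q h))]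

theorem IsGraph.eq_restrict_of_subgraph (hg : IsGraph g) (hg' : IsGraph g')
    (hsub : g'.Subgraph g) : g' = g.restrict (g'.Tk ∪ g'.Cf) g'.Arr := by
  have hTk : ∀ x ∈ g.Tk, x ∈ g'.Tk ∪ g'.Cf → x ∈ g'.Tk := fun x hx hx' =>
    hx'.resolve_right fun hc => Set.disjoint_left.1 hg.1 hx (hsub.2.1 hc)
  have hCf : ∀ x ∈ g.Cf, x ∈ g'.Tk ∪ g'.Cf → x ∈ g'.Cf := fun x hx hx' =>
    hx'.resolve_left fun ht => Set.disjoint_left.1 hg.1 (hsub.1 ht) hx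
  obtain ⟨hsTk, hsCf, hsArr, hsinc, hsia, hstl, hscl⟩ := hsub
  ext q <;> simp only [PreGraph.restrict, Set.mem_inter_iff, Set.mem_ofPred_eq]
  · exact ⟨fun hq => ⟨hsTk hq, Or.inl hq⟩, fun hq => hTk q hq.1 hq.2⟩
  · exact ⟨fun hq => ⟨hsCf hq, Or.inr hq⟩, fun hq => hCf q hq.1 hq.2⟩
  · exact ⟨fun hq => ⟨hsArr hq, hq⟩, And.right⟩
  · exact ⟨fun hq => ⟨hsinc hq, hg'.2.1.1 q hq⟩,
      fun hq => hg.2.1.mem_of_subset hg'.2.1 hsinc hq.1 hq.2⟩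
  · exact ⟨fun hq => ⟨hsia hq, hg'.2.2.2.1.1 q hq⟩,
      fun hq => hg.2.2.2.1.mem_of_subset hg'.2.2.2.1 hsia hq.1 hq.2⟩
  · exact ⟨fun hq => ⟨hstl hq, Or.inl (hg'.2.2.2.2.1.1 q hq)⟩, fun hq =>
      hg.2.2.2.2.1.mem_of_subset hg'.2.2.2.2.1 hstl hq.1
        (hTk _ (hg.2.2.2.2.1.1 q hq.1) hq.2)⟩
  · exact ⟨fun hq => ⟨hscl hq, Or.inr (hg'.2.2.2.2.2.1 q hq)⟩, fun hq =>
      hg.2.2.2.2.2.mem_of_subset hg'.2.2.2.2.2 hscl hq.1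
        (hCf _ (hg.2.2.2.2.2.1 q hq.1) hq.2)⟩

theorem InArrowSeq.of_nh {u : V} {ars : List A} (h : InArrowSeq (g.Nh u) u ars) :
    InArrowSeq g u ars := by
  obtain ⟨hnd, hmem, hidx⟩ := h
  refine ⟨hnd, fun a => ?_, fun i a hi => (hidx i a hi).1⟩
  rw [hmem a]
  constructor
  · rintro ⟨⟨ha, -⟩, w, hw, -⟩
    exact ⟨ha, w, hw⟩
  · rintro ⟨ha, w, hw⟩
    have hia : a ∈ g.incidentArrows u := ⟨ha, w, Or.inl hw⟩
    exact ⟨⟨ha, hia⟩, w, hw, hia⟩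

variable {Ty : Set L} {le : Set (L × L)} {C : Set L} {sig : Set (L × (List L × L))}

theorem IsStructureGraph.exists_inArrowSeq (hg : IsStructureGraph Ty le C sig g) {u : V}
    (hu : u ∈ g.Cf) :
    ∃ c ins out ars, (u, c) ∈ g.cl ∧ (c, (ins, out)) ∈ sig ∧ InArrowSeq g u ars ∧
      ars.length = ins.length := by
  obtain ⟨c, ins, out, hcl, -, hsig, -, -, -, -, -, -, ars, hars, hlen, -⟩ := hg.2.2 u hu
  exact ⟨c, ins, out, ars, hcl, hsig, hars.of_nh, hlen⟩

theorem IsStructureGraph.exists_inc_of_mem_cf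
    (hins : ∀ c ins out, (c, (ins, out)) ∈ sig → ins ≠ [])
    (hg : IsStructureGraph Ty le C sig g) {u : V} (hu : u ∈ g.Cf) :
    ∃ a w, (a, (w, u)) ∈ g.inc := by
  obtain ⟨c, ins, out, ars, -, hsig, hars, hlen⟩ := hg.exists_inArrowSeq hu
  obtain ⟨a, ha⟩ := List.exists_mem_of_ne_nil ars
    (List.ne_nil_of_length_pos (hlen ▸ List.length_pos_of_ne_nil (hins c ins out hsig)))
  obtain ⟨-, w, hw⟩ := (hars.2.1 a).1 ha
  exact ⟨a, w, hw⟩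

/-- The number of inputs of a configurator is fixed by the signature of its constructor, so a
structure subgraph cannot drop any of them. -/
theorem IsStructureGraph.mem_arr_of_inc_of_mem_cf (hsig : IsFunctionOn sig C)
    (hg : IsStructureGraph Ty le C sig g) (hg' : IsStructureGraph Ty le C sig g')
    (hsub : g'.Subgraph g) {u w : V} {y : A} (hu : u ∈ g'.Cf) (hy : (y, (w, u)) ∈ g.inc) :
    y ∈ g'.Arr := by
  obtain ⟨c, ins, out, ars, hcl, hsigc, hars, hlen⟩ := hg.exists_inArrowSeq (hsub.2.1 hu)
  obtain ⟨c', ins', out', ars', hcl', hsigc', hars', hlen'⟩ := hg'.exists_inArrowSeq hu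
  obtain rfl : c' = c := hg.1.2.2.2.2.2.eq_of_mem (hsub.2.2.2.2.2.2 hcl') hcl
  obtain rfl : ins' = ins := congrArg Prod.fst (hsig.eq_of_mem hsigc' hsigc)
  have hsubset : ars' ⊆ ars := fun b hb => by
    obtain ⟨hb, v, hv⟩ := (hars'.2.1 b).1 hb
    exact (hars.2.1 b).2 ⟨hsub.2.2.1 hb, v, hsub.2.2.2.1 hv⟩
  have hperm : ars'.Perm ars :=
    (List.subperm_of_subset hars'.1 hsubset).perm_of_length_le (by omega)
  exact ((hars'.2.1 y).1 (hperm.mem_iff.2 ((hars.2.1 y).2 ⟨hg.1.2.1.1 _ hy, w, hy⟩))).1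

theorem chainIn_append {l₁ l₂ : List A} {s t : V} :
    ChainIn g (l₁ ++ l₂) s t ↔ ∃ m, ChainIn g l₁ s m ∧ ChainIn g l₂ m t := by
  induction l₁ generalizing s with
  | nil => simp [ChainIn]
  | cons a l ih =>
    simp only [List.cons_append, ChainIn, ih]
    aesop

theorem chainIn_append_singleton {l : List A} {a : A} {s t : V} :
    ChainIn g (l ++ [a]) s t ↔ ∃ m, ChainIn g l s m ∧ a ∈ g.Arr ∧ (a, (m, t)) ∈ g.inc := by
  simp [chainIn_append, ChainIn]

theorem ChainIn.mem_arr {l : List A} {s t : V} (h : ChainIn g l s t) : ∀ b ∈ l, b ∈ g.Arr := by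
  induction l generalizing s with
  | nil => simp
  | cons a l ih =>
    obtain ⟨ha, m, -, hl⟩ := h
    simpa [ha] using ih hl

theorem ChainIn.src_eq (hg : IsGraph g) {l : List A} {s s' t : V} (h : ChainIn g l s t)
    (h' : ChainIn g l s' t) : s = s' := by
  cases l with
  | nil => exact h.trans h'.symm
  | cons a l =>
    obtain ⟨-, m, hinc, -⟩ := h
    obtain ⟨-, m', hinc', -⟩ := h'
    exact congrArg Prod.fst (hg.inc_unique hinc hinc')

theorem mem_tes_ext_iff {a : A} {v : V} {ars : List A} {Ss : List (List (Trail V A))}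
    {e : Trail V A} :
    e ∈ List.flatten (List.zipWith
        (fun (ai : A) (Si : List (Trail V A)) =>
          Si.map (fun e => (⟨e.arrows ++ [ai, a], e.src, v⟩ : Trail V A))) ars Ss) ↔
      ∃ (i : ℕ) (ai : A) (Si : List (Trail V A)), ars[i]? = some ai ∧ Ss[i]? = some Si ∧
        ∃ e₀ ∈ Si, e = ⟨e₀.arrows ++ [ai, a], e₀.src, v⟩ := by
  simp only [List.mem_flatten, List.mem_iff_getElem? (l := List.zipWith _ _ _),
    List.getElem?_zipWith_eq_some]
  constructor
  · rintro ⟨_, ⟨i, ai, Si, hi, hSi, rfl⟩, he⟩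
    obtain ⟨e₀, he₀, rfl⟩ := List.mem_map.1 he
    exact ⟨i, ai, Si, hi, hSi, e₀, he₀, rfl⟩
  · rintro ⟨i, ai, Si, hi, hSi, e₀, he₀, rfl⟩
    exact ⟨_, ⟨i, ai, Si, hi, hSi, rfl⟩, List.mem_map_of_mem he₀⟩

theorem TES.chainIn {tr : Trail V A} {S : List (Trail V A)} (h : TES g tr S) :
    ∀ e ∈ S, ChainIn g e.arrows e.src tr.src := by
  induction h with
  | nonext tr _ =>
    intro e he
    obtain rfl := List.mem_singleton.1 he
    rfl
  | ext tr a u ars Ss hext hinc hars hlen hrec ih =>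
    intro e he
    obtain ⟨i, ai, Si, hi, hSi, e₀, he₀, rfl⟩ := mem_tes_ext_iff.1 he
    obtain ⟨hai, w, hw⟩ := (hars.2.1 ai).1 (List.mem_of_getElem? hi)
    exact chainIn_append.2
      ⟨w, ih i ai w Si hi hSi hw e₀ he₀, hai, u, hw, hext.1, tr.src, hinc, rfl⟩

theorem TES.ne_nil (hg : IsGraph g) (hin : ∀ u ∈ g.Cf, ∃ a w, (a, (w, u)) ∈ g.inc)
    {tr : Trail V A} {S : List (Trail V A)} (h : TES g tr S) (hsrc : tr.src ∈ g.Tk) :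
    S ≠ [] := by
  induction h with
  | nonext => simp
  | ext tr a u ars Ss hext hinc hars hlen hrec ih =>
    have hu : u ∈ g.Cf := hg.src_mem_cf_of_tgt_mem_tk hinc hsrc
    obtain ⟨b, w, hb⟩ := hin u hu
    obtain ⟨i, Si, hi, hSi⟩ :=
      exists_getElem?_of_mem_of_length_eq hlen ((hars.2.1 b).2 ⟨hg.2.1.1 _ hb, w, hb⟩)
    obtain ⟨e, he⟩ := List.exists_mem_of_ne_nil _
      (ih i b w Si hi hSi hb (hg.src_mem_tk_of_tgt_mem_cf hb hu))
    exact List.ne_nil_of_mem (mem_tes_ext_iff.2 ⟨i, b, Si, hi, hSi, e, he, rfl⟩)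

/-- Uni-structuredness makes the backward extension through a token unique, while `TES`
branches over all inputs of each configurator. -/
theorem TES.exists_isSuffix (hg : IsGraph g) (hus : UniStructured g)
    (hin : ∀ u ∈ g.Cf, ∃ a w, (a, (w, u)) ∈ g.inc) {tr : Trail V A} {S : List (Trail V A)}
    (h : TES g tr S) (hsrc : tr.src ∈ g.Tk) {l : List A} {s : V}
    (hch : ChainIn g l s tr.src) (hnd : l.Nodup) (hdisj : l.Disjoint tr.arrows) :
    ∃ e ∈ S, l <:+ e.arrows := by
  induction h generalizing l s with
  | nonext tr hne =>
    refine ⟨_, List.mem_singleton_self _, ?_⟩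
    obtain rfl | ⟨l₀, y, rfl⟩ := l.eq_nil_or_concat'
    · exact List.nil_suffix
    · obtain ⟨m, -, hy, hinc⟩ := chainIn_append_singleton.1 hch
      exact (hne ⟨y, hy, fun hy' => hdisj (by simp) hy', m, hinc⟩).elim
  | ext tr a u ars Ss hext hinc hars hlen hrec ih =>
    have hu : u ∈ g.Cf := hg.src_mem_cf_of_tgt_mem_tk hinc hsrc
    obtain ⟨e, he⟩ := List.exists_mem_of_ne_nil _
      ((TES.ext tr a u ars Ss hext hinc hars hlen hrec).ne_nil hg hin hsrc)
    obtain rfl | ⟨l₀, y, rfl⟩ := l.eq_nil_or_concat'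
    · exact ⟨e, he, List.nil_suffix⟩
    obtain ⟨m, hch₀, hy, hyinc⟩ := chainIn_append_singleton.1 hch
    obtain rfl : y = a := hus _ hsrc y hy a hext.1 ⟨m, hyinc⟩ ⟨u, hinc⟩
    obtain rfl : m = u := congrArg Prod.fst (hg.inc_unique hyinc hinc)
    obtain rfl | ⟨l₁, x, rfl⟩ := l₀.eq_nil_or_concat'
    · obtain ⟨-, ai, -, -, -, e₀, -, rfl⟩ := mem_tes_ext_iff.1 he
      exact ⟨_, he, e₀.arrows ++ [ai], by simp⟩
    obtain ⟨w, hch₁, hx, hxinc⟩ := chainIn_append_singleton.1 hch₀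
    obtain ⟨i, Si, hi, hSi⟩ :=
      exists_getElem?_of_mem_of_length_eq hlen ((hars.2.1 x).2 ⟨hx, w, hxinc⟩)
    have hdisj₁ : l₁.Disjoint (x :: y :: tr.arrows) := by
      intro b hb hb'
      rcases List.mem_cons.1 hb' with rfl | hb'
      · exact List.disjoint_of_nodup_append (hnd.sublist (by simp)) hb (List.mem_singleton_self b)
      rcases List.mem_cons.1 hb' with rfl | hb'
      · exact List.disjoint_of_nodup_append hnd (by simp [hb]) (List.mem_singleton_self b)
      · exact hdisj (by simp [hb]) hb'
    obtain ⟨e₁, he₁, p, hp⟩ := ih i x w Si hi hSi hxinc (hg.src_mem_tk_of_tgt_mem_cf hxinc hu)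
      hch₁ (hnd.sublist (by simp)) hdisj₁
    exact ⟨_, mem_tes_ext_iff.2 ⟨i, x, Si, hi, hSi, e₁, he₁, rfl⟩, p, by simp [← hp]⟩

theorem TES.exists_src_eq (hg : IsGraph g) (hus : UniStructured g)
    (hin : ∀ u ∈ g.Cf, ∃ a w, (a, (w, u)) ∈ g.inc) {tr : Trail V A} {S : List (Trail V A)}
    (h : TES g tr S) (hsrc : tr.src ∈ g.Tk) {l : List A} {s : V}
    (hch : ChainIn g l s tr.src) (hnd : l.Nodup) (hdisj : l.Disjoint tr.arrows)
    (hs : ∀ a ∈ g.Arr, ∀ w, (a, (w, s)) ∉ g.inc) : ∃ e ∈ S, e.src = s := by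
  obtain ⟨e, he, p, hp⟩ := h.exists_isSuffix hg hus hin hsrc hch hnd hdisj
  refine ⟨e, he, ?_⟩
  obtain ⟨m, hpm, hlm⟩ := chainIn_append.1 (hp ▸ h.chainIn e he)
  obtain rfl := hlm.src_eq hg hch
  obtain rfl | ⟨p₀, z, rfl⟩ := p.eq_nil_or_concat'
  · exact hpm
  · obtain ⟨w, -, hz, hzinc⟩ := chainIn_append_singleton.1 hpm
    exact (hs z hz w hzinc).elim

theorem mem_arr_or_mem_trailArrowSet_of_chainIn (hg : IsGraph g) (hg' : IsGraph g')
    (hsub : g'.Subgraph g) {Ss : List (List (Trail V A))}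
    (hentry : ∀ (l : List A) (s m : V), l ≠ [] → ChainIn g l s m → l.Nodup →
      m ∈ g'.Tk ∪ g'.Cf → (∀ b ∈ l, b ∉ g'.Arr) → ∃ S ∈ Ss, ∀ b ∈ l, b ∈ trailArrowSet S)
    {l : List A} {s m : V} (hch : ChainIn g l s m) (hnd : l.Nodup)
    (hm : m ∈ g'.Tk ∪ g'.Cf) : ∀ b ∈ l, b ∈ g'.Arr ∨ ∃ S ∈ Ss, b ∈ trailArrowSet S := by
  induction hlen : l.length using Nat.strong_induction_on generalizing l s m with
  | _ n ih =>
    by_cases hfree : ∀ b ∈ l, b ∉ g'.Arr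
    · rcases eq_or_ne l [] with rfl | hl
      · simp
      obtain ⟨S, hS, hcov⟩ := hentry l s m hl hch hnd hm hfree
      exact fun b hb => Or.inr ⟨S, hS, hcov b hb⟩
    obtain ⟨z, hz, hzg'⟩ : ∃ z ∈ l, z ∈ g'.Arr := by simpa using hfree
    obtain ⟨p, q, rfl⟩ := List.append_of_mem hz
    obtain ⟨m₁, hp, -, m₂, hzinc, hq⟩ := chainIn_append.1 hch
    obtain ⟨hndp, hndq, -⟩ := List.nodup_append.1 hnd
    intro b hb
    simp only [List.mem_append, List.mem_cons] at hb
    rcases hb with hb | rfl | hb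
    · exact ih p.length (by simp [← hlen]) hp hndp
        (hg'.src_mem (hg.mem_inc_of_subgraph hg' hsub hzg' hzinc)) rfl b hb
    · exact Or.inl hzg'
    · exact ih q.length (by simp [← hlen]; omega) hq (List.nodup_cons.1 hndq).2 hm rfl b hb

theorem exists_tes_covering_of_chainIn {Cs : CSpace V A L} (hsig : IsFunctionOn Cs.sig Cs.C)
    (hins : ∀ c ins out, (c, (ins, out)) ∈ Cs.sig → ins ≠ []) {t : V}
    (hc : IsConstruction Cs g t) (hc' : IsConstruction Cs g' t) (hsub : g'.Subgraph g)
    {trs : List (Trail V A)} (hgen : TES g' (Trail.nil t) trs)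
    {Ss : List (List (Trail V A))} (hSlen : Ss.length = trs.length)
    (hTES : ∀ (i : ℕ) (tri : Trail V A) (Si : List (Trail V A)),
        trs[i]? = some tri → Ss[i]? = some Si → TES g tri Si)
    {l : List A} {s m : V} (hl : l ≠ []) (hch : ChainIn g l s m) (hnd : l.Nodup)
    (hm : m ∈ g'.Tk ∪ g'.Cf) (hfree : ∀ b ∈ l, b ∉ g'.Arr) :
    ∃ S ∈ Ss, ∀ b ∈ l, b ∈ trailArrowSet S := by
  obtain ⟨-, hgs, -, -, -, hus, -, -⟩ := hc
  obtain ⟨-, hgs', -, -, -, hus', ht', htrail'⟩ := hc'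
  obtain ⟨l₀, y, rfl⟩ := l.eq_nil_or_concat'.resolve_left hl
  obtain ⟨w, -, hy, hyinc⟩ := chainIn_append_singleton.1 hch
  have hyg' : y ∉ g'.Arr := hfree y (by simp)
  have hmtk : m ∈ g'.Tk :=
    hm.resolve_right fun hmc => hyg' (hgs.mem_arr_of_inc_of_mem_cf hsig hgs' hsub hmc hyinc)
  have hnoin : ∀ b ∈ g'.Arr, ∀ v, (b, (v, m)) ∉ g'.inc := fun b hb v hbinc => hyg' <| by
    rwa [← hus m (hsub.1 hmtk) b (hsub.2.2.1 hb) y hy ⟨v, hsub.2.2.2.1 hbinc⟩ ⟨w, hyinc⟩]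
  obtain ⟨ρ, ⟨hρnd, hρch, -, -⟩, hρs, hρt⟩ := htrail' m (Or.inl hmtk)
  rw [hρs, hρt] at hρch
  obtain ⟨tri, htri, htrim⟩ := hgen.exists_src_eq hgs'.1 hus'
    (fun u hu => hgs'.exists_inc_of_mem_cf hins hu) ht' hρch hρnd
    (List.disjoint_nil_right _) hnoin
  obtain ⟨i, S, hi, hS⟩ := exists_getElem?_of_mem_of_length_eq hSlen htri
  have htriArr : ∀ b ∈ tri.arrows, b ∈ g'.Arr := (hgen.chainIn tri htri).mem_arr
  obtain ⟨e, he, hsuf⟩ := (hTES i tri S hi hS).exists_isSuffix hgs.1 hus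
    (fun u hu => hgs.exists_inc_of_mem_cf hins hu) (htrim ▸ hsub.1 hmtk) (htrim ▸ hch) hnd
    (fun b hb hb' => hfree b hb (htriArr b hb'))
  exact ⟨S, List.mem_of_getElem? hS, fun b hb => ⟨e, he, hsuf.subset hb⟩⟩

theorem exists_chainIn_of_mem_arr (hg : IsGraph g) {t : V}
    (htrail : ∀ v ∈ g.Tk ∪ g.Cf, ∃ tr : Trail V A, IsTrailIn g tr ∧ tr.src = v ∧ tr.tgt = t)
    {b : A} (hb : b ∈ g.Arr) : ∃ l s, ChainIn g l s t ∧ l.Nodup ∧ b ∈ l := by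
  obtain ⟨⟨v, w⟩, hinc, -⟩ := hg.2.1.2 b hb
  obtain ⟨τ, ⟨hnd, hch, -, -⟩, hτs, hτt⟩ := htrail w (hg.tgt_mem hinc)
  rw [hτs, hτt] at hch
  by_cases hbτ : b ∈ τ.arrows
  · exact ⟨τ.arrows, w, hch, hnd, hbτ⟩
  · exact ⟨b :: τ.arrows, v, ⟨hb, w, hinc, hch⟩, List.nodup_cons.2 ⟨hbτ, hnd⟩,
      List.mem_cons_self⟩

theorem mem_vertices_or_mem_trailVertexSet (hg : IsGraph g) (hg' : IsGraph g')
    (hsub : g'.Subgraph g) {t : V} (ht : t ∈ g'.Tk ∪ g'.Cf)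
    (htrail : ∀ v ∈ g.Tk ∪ g.Cf, ∃ tr : Trail V A, IsTrailIn g tr ∧ tr.src = v ∧ tr.tgt = t)
    {Ss : List (List (Trail V A))}
    (harr : ∀ b ∈ g.Arr, b ∈ g'.Arr ∨ ∃ S ∈ Ss, b ∈ trailArrowSet S) :
    ∀ x ∈ g.Tk ∪ g.Cf, x ∈ g'.Tk ∪ g'.Cf ∨ ∃ S ∈ Ss, x ∈ trailVertexSet g S := by
  intro x hx
  obtain ⟨τ, ⟨-, hch, -, -⟩, hτs, hτt⟩ := htrail x hx
  rw [hτs, hτt] at hch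
  cases hτ : τ.arrows with
  | nil =>
    rw [hτ] at hch
    exact Or.inl (hch ▸ ht)
  | cons a _ =>
    rw [hτ] at hch
    obtain ⟨ha, m, hinc, -⟩ := hch
    rcases harr a ha with ha' | ⟨S, hS, haS⟩
    · exact Or.inl (hg'.src_mem (hg.mem_inc_of_subgraph hg' hsub ha' hinc))
    · exact Or.inr ⟨S, hS, Or.inl ⟨a, haS, m, Or.inl hinc⟩⟩

end SplitCover

/-- the generator's graph together with all induced construction graphs of a
split cover the whole construction graph. -/
theorem split_covers_construction {V A L : Type*}
    (Cs : CSpace V A L) (hCs : IsCSpace Cs)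
    (g : PreGraph V A L) (t : V) (hc : IsConstruction Cs g t)
    (g' : PreGraph V A L) (hc' : IsConstruction Cs g' t) (hsub : g'.Subgraph g)
    (trs : List (Trail V A)) (hgen : TES g' (Trail.nil t) trs)
    (Ss : List (List (Trail V A))) (hSlen : Ss.length = trs.length)
    (hTES : ∀ (i : ℕ) (tri : Trail V A) (Si : List (Trail V A)),
        trs[i]? = some tri → Ss[i]? = some Si → TES g tri Si) :
    g = (Ss.map (trGraph g)).foldl (· ∪ ·) g' := by
  obtain ⟨-, -, hsig, hsigs, -⟩ := hCs
  have hins : ∀ c ins out, (c, (ins, out)) ∈ Cs.sig → ins ≠ [] :=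
    fun c ins out h => (hsigs c ins out h).1
  have ⟨_, ⟨hg, _⟩, _, _, _, _, _, htrail⟩ := hc
  have ⟨_, ⟨hg', _⟩, _, _, _, _, ht', _⟩ := hc'
  have ht : t ∈ g'.Tk ∪ g'.Cf := Or.inl ht'
  have harr : ∀ b ∈ g.Arr, b ∈ g'.Arr ∨ ∃ S ∈ Ss, b ∈ trailArrowSet S := fun b hb => by
    obtain ⟨l, s, hch, hnd, hbl⟩ := exists_chainIn_of_mem_arr hg htrail hb
    exact mem_arr_or_mem_trailArrowSet_of_chainIn hg hg' hsub
      (fun _ _ _ hl hch hnd hm hfree => exists_tes_covering_of_chainIn hsig hins hc hc' hsub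
        hgen hSlen hTES hl hch hnd hm hfree) hch hnd ht b hbl
  have hvert := mem_vertices_or_mem_trailVertexSet hg hg' hsub ht htrail harr
  calc g = g.restrict ((g'.Tk ∪ g'.Cf) ∪ ⋃ S ∈ Ss, trailVertexSet g S)
        (g'.Arr ∪ ⋃ S ∈ Ss, trailArrowSet S) :=
        (hg.restrict_eq_self (fun x hx => by simpa using hvert x hx)
          (fun b hb => by simpa using harr b hb)).symm
    _ = (Ss.map (trGraph g)).foldl (· ∪ ·) (g.restrict (g'.Tk ∪ g'.Cf) g'.Arr) :=
        (PreGraph.foldl_union_restrict ..).symm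
    _ = (Ss.map (trGraph g)).foldl (· ∪ ·) g' := by
        rw [← hg.eq_restrict_of_subgraph hg' hsub]

end RST
end

section
/- Let (g, t) be a construction with decomposition D. Given the leaf construction-sequence lcs(D) = [(g1, t1),…,(gn, tn)], it holds that Ft(g, t) = Ft(g1, t1) ⊕ ⋯ ⊕ Ft(gn, tn). -/
/-!
Induction on the decomposition; the work is done at a single split `((g', t), ics)` of `(g, t)`
with `CTS(g', t) = [tr₁, …, trₙ]`. Wherever `g'` extends a trail, `g` extends it in the same way
(a token is the target of at most one arrow, and a configurator of `g'` has the same input arrows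
in `g`), so unfolding `TES([]_t)` in `g` along `CTS(g', t)` shows that `Ft(g, t)` is the sequence
of sources of `TES(tr₁) ⊕ ⋯ ⊕ TES(trₙ)`. Moreover `TES(trᵢ)` is the complete trail sequence of
`ic(trᵢ)`: its trails never reuse an arrow of `trᵢ` (a configurator has a single output), and
since every configurator has an input, each arrow used by an extension step occurs in `TES(trᵢ)`,
so restricting `g` to these arrows changes no step. Thus `Ft(g, t)` is the concatenation of the
`Ft(ic(trᵢ))`, to which the induction hypothesis applies.
-/

namespace List

variable {α β : Type*} {R : α → β → Prop}

theorem forall₂_of_getElem? {l₁ : List α} {l₂ : List β} (hlen : l₁.length = l₂.length)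
    (h : ∀ (i : ℕ) (a : α) (b : β), l₁[i]? = some a → l₂[i]? = some b → R a b) :
    Forall₂ R l₁ l₂ :=
  forall₂_of_length_eq_of_get hlen fun i h₁ h₂ =>
    h i _ _ (getElem?_eq_getElem h₁) (getElem?_eq_getElem h₂)

theorem Forall₂.of_getElem? {l₁ : List α} {l₂ : List β} (h : Forall₂ R l₁ l₂) {i : ℕ} {a : α}
    {b : β} (h₁ : l₁[i]? = some a) (h₂ : l₂[i]? = some b) : R a b := by
  obtain ⟨hi₁, rfl⟩ := getElem?_eq_some_iff.1 h₁
  obtain ⟨hi₂, rfl⟩ := getElem?_eq_some_iff.1 h₂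
  exact h.get hi₁ hi₂

theorem exists_getElem?_eq_some_of_length_eq {l₁ : List α} {l₂ : List β}
    (hlen : l₁.length = l₂.length) {i : ℕ} {a : α} (h : l₁[i]? = some a) :
    ∃ b, l₂[i]? = some b :=
  ⟨_, getElem?_eq_getElem (hlen ▸ (getElem?_eq_some_iff.1 h).1)⟩

theorem ext_of_getElem?_eq {l₁ l₂ : List α} (hlen : l₁.length = l₂.length)
    (h : ∀ (i : ℕ) (a b : α), l₁[i]? = some a → l₂[i]? = some b → a = b) : l₁ = l₂ :=
  forall₂_eq_eq_eq ▸ forall₂_of_getElem? hlen h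

theorem exists_forall₂_of_forall_mem {l : List α} (h : ∀ a ∈ l, ∃ b, R a b) :
    ∃ l' : List β, Forall₂ R l l' := by
  induction l with
  | nil => exact ⟨[], .nil⟩
  | cons a l ih =>
    obtain ⟨b, hb⟩ := h a mem_cons_self
    obtain ⟨l', hl'⟩ := ih fun x hx => h x (mem_cons_of_mem a hx)
    exact ⟨b :: l', .cons hb hl'⟩

theorem exists_flatten_eq_of_forall₂_flatten {L : List (List α)} {l : List β}
    (h : Forall₂ R L.flatten l) : ∃ Ls, l = Ls.flatten ∧ Forall₂ (Forall₂ R) L Ls := by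
  induction L generalizing l with
  | nil => exact ⟨[], forall₂_nil_left_iff.1 h, .nil⟩
  | cons l₀ L ih =>
    rw [flatten_cons] at h
    have h₁ := forall₂_take l₀.length h
    have h₂ := forall₂_drop l₀.length h
    rw [take_left] at h₁
    rw [drop_left] at h₂
    obtain ⟨Ls, hLs, hL⟩ := ih h₂
    exact ⟨take l₀.length l :: Ls, by rw [flatten_cons, ← hLs, take_append_drop], .cons h₁ hL⟩

end List

namespace RST

variable {V A L : Type*}

theorem IsFunctionOn.unique {α β : Type*} {R : Set (α × β)} {D : Set α} (h : IsFunctionOn R D)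
    {x : α} {y₁ y₂ : β} (h₁ : (x, y₁) ∈ R) (h₂ : (x, y₂) ∈ R) : y₁ = y₂ :=
  (h.2 x (h.1 _ h₁)).unique h₁ h₂

namespace IsGraph

variable {g : PreGraph V A L} {a : A} {u x : V}

theorem arr_of_inc (hg : IsGraph g) {p : V × V} (h : (a, p) ∈ g.inc) : a ∈ g.Arr :=
  hg.2.1.1 _ h

theorem inc_unique_s11 (hg : IsGraph g) {p q : V × V} (h₁ : (a, p) ∈ g.inc) (h₂ : (a, q) ∈ g.inc) :
    p = q :=
  hg.2.1.unique h₁ h₂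

theorem cf_of_inc (hg : IsGraph g) (h : (a, (u, x)) ∈ g.inc) (hx : x ∈ g.Tk) : u ∈ g.Cf :=
  ((hg.2.2.1 a u x h).resolve_left fun hux => Set.disjoint_left.1 hg.1 hx hux.2).1

theorem tk_of_inc (hg : IsGraph g) (h : (a, (x, u)) ∈ g.inc) (hu : u ∈ g.Cf) : x ∈ g.Tk :=
  ((hg.2.2.1 a x u h).resolve_right fun hxu => Set.disjoint_left.1 hg.1 hxu.2 hu).1

end IsGraph

section InArrowSeq

variable {g : PreGraph V A L} {u : V} {ars : List A}

theorem InArrowSeq.inc_of_getElem? (h : InArrowSeq g u ars) {i : ℕ} {a : A}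
    (ha : ars[i]? = some a) : ∃ w, (a, (w, u)) ∈ g.inc :=
  ((h.2.1 a).1 (List.mem_of_getElem? ha)).2

theorem InArrowSeq.getElem?_eq (hg : IsGraph g) (h : InArrowSeq g u ars) {i : ℕ} {a : A} {w : V}
    (hinc : (a, (w, u)) ∈ g.inc) (hia : (a, i + 1) ∈ g.ia) : ars[i]? = some a := by
  obtain ⟨j, hj⟩ := List.mem_iff_getElem?.1 ((h.2.1 a).2 ⟨hg.arr_of_inc hinc, w, hinc⟩)
  obtain rfl : i = j := Nat.succ_injective (hg.2.2.2.1.unique hia (h.2.2 j a hj))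
  exact hj

theorem InArrowSeq.unique (hg : IsGraph g) {ars' : List A} (h : InArrowSeq g u ars)
    (h' : InArrowSeq g u ars') : ars = ars' := by
  have key : ∀ {l l'}, InArrowSeq g u l → InArrowSeq g u l' →
      ∀ i a, l[i]? = some a → l'[i]? = some a := fun hl hl' i a ha =>
    have ⟨_, hw⟩ := hl.inc_of_getElem? ha
    hl'.getElem?_eq hg hw (hl.2.2 i a ha)
  exact List.ext_getElem? fun i => Option.ext fun a => ⟨key h h' i a, key h' h i a⟩

theorem InArrowSeq.of_Nh (h : InArrowSeq (g.Nh u) u ars) : InArrowSeq g u ars := by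
  refine ⟨h.1, fun a => ?_, fun i a ha => (h.2.2 i a ha).1⟩
  rw [h.2.1 a]
  constructor
  · rintro ⟨⟨ha, -⟩, w, hw, -⟩
    exact ⟨ha, w, hw⟩
  · rintro ⟨ha, w, hw⟩
    have hincid : a ∈ g.incidentArrows u := ⟨ha, w, Or.inl hw⟩
    exact ⟨⟨ha, hincid⟩, w, hw, hincid⟩

end InArrowSeq

namespace IsStructureGraph

variable {Ty : Set L} {le : Set (L × L)} {C : Set L} {sig : Set (L × (List L × L))}
  {g g' : PreGraph V A L} {u : V} {ars : List A}

theorem exists_inArrowSeq_s11 (hsg : IsStructureGraph Ty le C sig g) (hu : u ∈ g.Cf) :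
    ∃ c ins out ars, (u, c) ∈ g.cl ∧ (c, (ins, out)) ∈ sig ∧ InArrowSeq g u ars ∧
      ars.length = ins.length := by
  obtain ⟨c, ins, out, hcl, -, hsig, hconf⟩ := hsg.2.2 u hu
  obtain ⟨ars, hars, hlen, -⟩ := hconf.2.2.2.2.2.2
  exact ⟨c, ins, out, ars, hcl, hsig, hars.of_Nh, hlen⟩

theorem inArrowSeq_ne_nil (hsg : IsStructureGraph Ty le C sig g)
    (hins : ∀ c ins out, (c, (ins, out)) ∈ sig → ins ≠ []) (hu : u ∈ g.Cf)
    (hars : InArrowSeq g u ars) : ars ≠ [] := by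
  obtain ⟨c, ins, out, ars', -, hsig, hars', hlen⟩ := hsg.exists_inArrowSeq_s11 hu
  rw [hars.unique hsg.1 hars', ← List.length_pos_iff, hlen, List.length_pos_iff]
  exact hins c ins out hsig

theorem out_unique (hsg : IsStructureGraph Ty le C sig g) (hu : u ∈ g.Cf) {a b : A} {w w' : V}
    (ha : (a, (u, w)) ∈ g.inc) (hb : (b, (u, w')) ∈ g.inc) : a = b := by
  obtain ⟨_, _, _, -, -, -, hconf⟩ := hsg.2.2 u hu
  have hNh : ∀ {x y}, (x, (u, y)) ∈ g.inc →
      x ∈ (g.Nh u).Arr ∧ ∃ w, (x, (u, w)) ∈ (g.Nh u).inc := fun {x y} h =>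
    have hx : x ∈ g.incidentArrows u := ⟨hsg.1.arr_of_inc h, y, Or.inr h⟩
    ⟨⟨hx.1, hx⟩, y, h, hx⟩
  exact hconf.2.2.2.2.1.unique (hNh ha) (hNh hb)

theorem inArrowSeq_of_subgraph (hsig : IsFunctionOn sig C)
    (hsg' : IsStructureGraph Ty le C sig g') (hsg : IsStructureGraph Ty le C sig g)
    (hsub : g'.Subgraph g) (hu : u ∈ g'.Cf) (hars : InArrowSeq g' u ars) :
    InArrowSeq g u ars := by
  obtain ⟨-, hCf, -, hinc, hia, -, hcl⟩ := hsub
  obtain ⟨c', ins', out', ars', hcl', hsig', hars', hlen'⟩ := hsg'.exists_inArrowSeq_s11 hu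
  obtain ⟨c, ins, out, ars₂, hcl₂, hsig₂, hars₂, hlen₂⟩ := hsg.exists_inArrowSeq_s11 (hCf hu)
  obtain rfl : c' = c := hsg.1.2.2.2.2.2.unique (hcl hcl') hcl₂
  obtain rfl : ins' = ins := congrArg Prod.fst (hsig.unique hsig' hsig₂)
  obtain rfl := hars.unique hsg'.1 hars'
  convert hars₂ using 1
  refine List.ext_of_getElem?_eq (hlen'.trans hlen₂.symm) fun i a b ha hb => ?_
  obtain ⟨w, hw⟩ := hars.inc_of_getElem? ha
  exact Option.some.inj ((hars₂.getElem?_eq hsg.1 (hinc hw) (hia (hars.2.2 i a ha))).symm.trans hb)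

end IsStructureGraph

section Trails

variable {g g' : PreGraph V A L}

theorem ChainIn.mono (hArr : g'.Arr ⊆ g.Arr) (hinc : g'.inc ⊆ g.inc) :
    ∀ {l : List A} {s t : V}, ChainIn g' l s t → ChainIn g l s t
  | [], _, _, h => h
  | _ :: _, _, _, ⟨ha, m, hm, hrest⟩ => ⟨hArr ha, m, hinc hm, ChainIn.mono hArr hinc hrest⟩

theorem ChainIn.exists_out (hg : IsGraph g) :
    ∀ {l : List A} {s t : V}, ChainIn g l s t → ∀ {b : A} {x u : V}, b ∈ l →
      (b, (x, u)) ∈ g.inc → u = t ∨ ∃ c ∈ l, ∃ m, (c, (u, m)) ∈ g.inc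
  | [], _, _, _, _, _, _, hb, _ => absurd hb List.not_mem_nil
  | _ :: rest, _, _, ⟨_, m, hm, hrest⟩, _, _, _, hb, hinc => by
    rcases List.mem_cons.1 hb with rfl | hb
    · obtain rfl : _ = m := congrArg Prod.snd (hg.inc_unique_s11 hinc hm)
      cases rest with
      | nil => exact .inl hrest
      | cons c _ =>
        obtain ⟨-, m', hm', -⟩ := hrest
        exact .inr ⟨c, by simp, m', hm'⟩
    · exact (hrest.exists_out hg hb hinc).imp_right
        fun ⟨c, hc, hcm⟩ => ⟨c, List.mem_cons_of_mem _ hc, hcm⟩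

theorem IsTrailIn.mono (hsub : g'.Subgraph g) {tr : Trail V A} (h : IsTrailIn g' tr) :
    IsTrailIn g tr :=
  ⟨h.1, h.2.1.mono hsub.2.2.1 hsub.2.2.2.1, Set.union_subset_union hsub.1 hsub.2.1 h.2.2.1,
    Set.union_subset_union hsub.1 hsub.2.1 h.2.2.2⟩

theorem Trail.append_nil_of_tgt_eq {w : Trail V A} {t : V} (h : w.tgt = t) :
    w.append (Trail.nil t) = w := by
  cases w
  cases h
  simp [Trail.append, Trail.nil]

end Trails

section TES

variable {Ty : Set L} {le : Set (L × L)} {C : Set L} {sig : Set (L × (List L × L))}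
  {g g' : PreGraph V A L}

/-- The sequence `(S₁ ◁ [a₁, a]) ⊕ ⋯ ⊕ (Sₙ ◁ [aₙ, a])` built in the recursive case of `TES`. -/
def extensionSeq (a : A) (s : V) (ars : List A) (Ss : List (List (Trail V A))) :
    List (Trail V A) :=
  (List.zipWith (fun ai Si => Si.map fun e => (⟨e.arrows ++ [ai, a], e.src, s⟩ : Trail V A))
    ars Ss).flatten

theorem mem_extensionSeq {a : A} {s : V} {ars : List A} {Ss : List (List (Trail V A))}
    {w : Trail V A} :
    w ∈ extensionSeq a s ars Ss ↔ ∃ (i : ℕ) (ai : A) (Si : List (Trail V A)) (e : Trail V A),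
      ars[i]? = some ai ∧ Ss[i]? = some Si ∧ e ∈ Si ∧ w = ⟨e.arrows ++ [ai, a], e.src, s⟩ := by
  simp only [extensionSeq, List.mem_flatten, List.mem_iff_getElem? (l := List.zipWith _ _ _),
    List.getElem?_zipWith_eq_some]
  constructor
  · rintro ⟨_, ⟨i, ai, Si, hai, hSi, rfl⟩, hw⟩
    obtain ⟨e, he, rfl⟩ := List.mem_map.1 hw
    exact ⟨i, ai, Si, e, hai, hSi, he, rfl⟩
  · rintro ⟨i, ai, Si, e, hai, hSi, he, rfl⟩
    exact ⟨_, ⟨i, ai, Si, hai, hSi, rfl⟩, List.mem_map_of_mem he⟩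

theorem srcSeq_extensionSeq (a : A) (s : V) (ars : List A) (Ss : List (List (Trail V A))) :
    srcSeq (extensionSeq a s ars Ss) = (List.zipWith (fun _ Si => srcSeq Si) ars Ss).flatten := by
  simp [srcSeq, extensionSeq, List.map_flatten, List.map_zipWith, Function.comp_def]

theorem TES.tgt_eq {tr : Trail V A} {S : List (Trail V A)} (hS : TES g tr S) {w : Trail V A}
    (hw : w ∈ S) : w.tgt = tr.src := by
  cases hS with
  | nonext => rw [List.mem_singleton.1 hw]
  | ext =>
    obtain ⟨_, _, _, _, _, _, _, rfl⟩ := mem_extensionSeq.1 hw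
    rfl

theorem TES.ne_nil_s11 (hsg : IsStructureGraph Ty le C sig g)
    (hins : ∀ c ins out, (c, (ins, out)) ∈ sig → ins ≠ []) {tr : Trail V A}
    {S : List (Trail V A)} (hS : TES g tr S) (hsrc : tr.src ∈ g.Tk) : S ≠ [] := by
  induction hS with
  | nonext => simp
  | ext tr a u ars Ss _ hinc hars hlen hrec ih =>
    have hu := hsg.1.cf_of_inc hinc hsrc
    obtain ⟨a₀, _, rfl⟩ := List.exists_cons_of_ne_nil (hsg.inArrowSeq_ne_nil hins hu hars)
    obtain ⟨S₀, _, rfl⟩ := List.exists_cons_of_ne_nil (List.ne_nil_of_length_eq_add_one hlen)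
    obtain ⟨s₀, hs₀⟩ := hars.inc_of_getElem? (i := 0) rfl
    obtain ⟨e, he⟩ :=
      List.exists_mem_of_ne_nil _ (ih 0 a₀ s₀ S₀ rfl rfl hs₀ (hsg.1.tk_of_inc hs₀ hu))
    exact List.ne_nil_of_mem (mem_extensionSeq.2 ⟨0, a₀, S₀, e, rfl, rfl, he, rfl⟩)

theorem TES.unique (hg : IsGraph g) (huni : UniStructured g) {tr : Trail V A}
    {S S' : List (Trail V A)} (hS : TES g tr S) (hsrc : tr.src ∈ g.Tk) (hS' : TES g tr S') :
    S = S' := by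
  induction hS generalizing S' with
  | nonext tr hne =>
    cases hS' with
    | nonext => rfl
    | ext _ a _ _ _ hext => exact absurd ⟨a, hext⟩ hne
  | ext tr a u ars Ss hext hinc hars hlen hrec ih =>
    cases hS' with
    | nonext _ hne => exact absurd ⟨a, hext⟩ hne
    | ext _ a' u' ars' Ss' hext' hinc' hars' hlen' hrec' =>
      obtain rfl : a' = a := huni _ hsrc a' hext'.1 a hext.1 hext'.2.2 hext.2.2
      obtain rfl : u' = u := congrArg Prod.fst (hg.inc_unique_s11 hinc' hinc)
      obtain rfl : ars' = ars := hars'.unique hg hars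
      suffices Ss = Ss' by rw [this]
      refine List.ext_of_getElem?_eq (hlen.trans hlen'.symm) fun i Si Si' hSi hSi' => ?_
      obtain ⟨ai, hai⟩ := List.exists_getElem?_eq_some_of_length_eq hlen hSi
      obtain ⟨si, hsi⟩ := hars.inc_of_getElem? hai
      exact ih i ai si Si hai hSi hsi (hg.tk_of_inc hsi (hg.cf_of_inc hinc hsrc))
        (hrec' i ai si Si' hai hSi' hsi)

theorem TES.isTrailIn_append (hsg : IsStructureGraph Ty le C sig g) {tr : Trail V A}
    {S : List (Trail V A)} (hS : TES g tr S) (htr : IsTrailIn g tr) (hwf : WellFormed g tr)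
    {w : Trail V A} (hw : w ∈ S) : IsTrailIn g (w.append tr) ∧ WellFormed g (w.append tr) := by
  induction hS generalizing w with
  | nonext =>
    obtain rfl := List.mem_singleton.1 hw
    exact ⟨htr, hwf⟩
  | ext tr a u ars Ss hext hinc hars hlen hrec ih =>
    obtain ⟨i, ai, Si, e, hai, hSi, he, rfl⟩ := mem_extensionSeq.1 hw
    obtain ⟨si, hsi⟩ := hars.inc_of_getElem? hai
    have hu := hsg.1.cf_of_inc hinc hwf.1
    have hsi_tk := hsg.1.tk_of_inc hsi hu
    have hai_ne : ai ≠ a := by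
      rintro rfl
      obtain rfl : u = tr.src := congrArg Prod.snd (hsg.1.inc_unique_s11 hsi hinc)
      exact Set.disjoint_left.1 hsg.1.1 hwf.1 hu
    -- an earlier occurrence of `ai` would be followed by the unique outgoing arrow `a` of `u`
    have hai_nmem : ai ∉ tr.arrows := by
      intro hmem
      rcases htr.2.1.exists_out hsg.1 hmem hsi with rfl | ⟨c, hc, m, hcm⟩
      · exact Set.disjoint_left.1 hsg.1.1 hwf.2 hu
      · exact hext.2.1 (hsg.out_unique hu hcm hinc ▸ hc)
    have h' := ih i ai si Si hai hSi hsi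
      ⟨List.nodup_cons.2 ⟨by simp [hai_ne, hai_nmem], List.nodup_cons.2 ⟨hext.2.1, htr.1⟩⟩,
        ⟨hsg.1.arr_of_inc hsi, u, hsi, hext.1, tr.src, hinc, htr.2.1⟩, .inl hsi_tk, htr.2.2.2⟩
      ⟨hsi_tk, hwf.2⟩ he
    simpa [Trail.append] using h'

theorem TES.isTrailIn_of_mem_nil (hsg : IsStructureGraph Ty le C sig g) {t : V} (ht : t ∈ g.Tk)
    {S : List (Trail V A)} (hS : TES g (Trail.nil t) S) {w : Trail V A} (hw : w ∈ S) :
    IsTrailIn g w ∧ WellFormed g w ∧ w.tgt = t := by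
  have htgt : w.tgt = t := hS.tgt_eq hw
  have h := hS.isTrailIn_append hsg ⟨List.nodup_nil, rfl, .inl ht, .inl ht⟩ ⟨ht, ht⟩ hw
  rw [Trail.append_nil_of_tgt_eq htgt] at h
  exact ⟨h.1, h.2, htgt⟩

theorem TES.srcSeq_eq_flatten (hsig : IsFunctionOn sig C)
    (hsg' : IsStructureGraph Ty le C sig g') (hsg : IsStructureGraph Ty le C sig g)
    (hsub : g'.Subgraph g) (huni : UniStructured g) {tr : Trail V A} {S' S : List (Trail V A)}
    (hS' : TES g' tr S') (hsrc : tr.src ∈ g'.Tk) (hS : TES g tr S) {Ts : List (List (Trail V A))}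
    (hTs : List.Forall₂ (fun w T => TES g (w.append tr) T) S' Ts) :
    srcSeq S = (Ts.map srcSeq).flatten := by
  induction hS' generalizing S Ts with
  | nonext tr =>
    obtain ⟨T, hT, rfl⟩ : ∃ T, TES g tr T ∧ Ts = [T] := by
      cases hTs with | cons hT hnil => cases hnil; exact ⟨_, hT, rfl⟩
    simp [hS.unique hsg.1 huni (hsub.1 hsrc) hT]
  | ext tr a u ars Ss hext hinc hars hlen hrec ih =>
    have hu := hsg'.1.cf_of_inc hinc hsrc
    cases hS with
    | nonext _ hne => exact absurd ⟨a, hsub.2.2.1 hext.1, hext.2.1, u, hsub.2.2.2.1 hinc⟩ hne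
    | ext _ a₂ u₂ ars₂ Ss₂ hext₂ hinc₂ hars₂ hlen₂ hrec₂ =>
      obtain rfl : a₂ = a := huni _ (hsub.1 hsrc) a₂ hext₂.1 a (hsub.2.2.1 hext.1) hext₂.2.2
        ⟨u, hsub.2.2.2.1 hinc⟩
      obtain rfl : u₂ = u := congrArg Prod.fst (hsg.1.inc_unique_s11 hinc₂ (hsub.2.2.2.1 hinc))
      obtain rfl : ars₂ = ars :=
        hars₂.unique hsg.1 (hsg'.inArrowSeq_of_subgraph hsig hsg hsub hu hars)
      obtain ⟨Tss, rfl, hTss⟩ := List.exists_flatten_eq_of_forall₂_flatten hTs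
      refine (srcSeq_extensionSeq _ _ _ _).trans ?_
      rw [List.map_flatten, List.flatten_flatten, List.map_map]
      congr 1
      refine List.ext_of_getElem?_eq (by simp [hlen, hlen₂, ← hTss.length_eq]) ?_
      intro i x y hx hy
      obtain ⟨ai, Si₂, hai, hSi₂, rfl⟩ := List.getElem?_zipWith_eq_some.1 hx
      rw [List.getElem?_map, Option.map_eq_some_iff] at hy
      obtain ⟨T, hT, rfl⟩ := hy
      obtain ⟨Si, hSi⟩ := List.exists_getElem?_eq_some_of_length_eq hlen.symm hai
      obtain ⟨si, hsi⟩ := hars.inc_of_getElem? hai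
      refine ih i ai si Si hai hSi hsi (hsg'.1.tk_of_inc hsi hu)
        (hrec₂ i ai si Si₂ hai hSi₂ (hsub.2.2.2.1 hsi)) ?_
      have := hTss.of_getElem? (List.getElem?_zipWith_eq_some.2 ⟨ai, Si, hai, hSi, rfl⟩) hT
      rw [List.forall₂_map_left_iff] at this
      simpa [Trail.append] using this

theorem TES.restrict (hsg : IsStructureGraph Ty le C sig g)
    (hins : ∀ c ins out, (c, (ins, out)) ∈ sig → ins ≠ []) {Vs : Set V} {As : Set A}
    {suf : List A} (hdisj : ∀ x ∈ As, x ∉ suf) {tr : Trail V A} {T : List (Trail V A)}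
    (hT : TES g tr T) {pre : List A} (hpre : tr.arrows = pre ++ suf) (hsrc : tr.src ∈ g.Tk)
    (hAs : ∀ w ∈ T, ∀ x ∈ w.arrows, x ∈ As) (v : V) :
    TES (g.restrict Vs As) ⟨pre, tr.src, v⟩ T := by
  induction hT generalizing pre with
  | nonext tr hne =>
    refine TES.nonext _ fun ⟨b, hb, hbpre, s, hbs⟩ => hne ⟨b, hb.1, ?_, s, hbs.1⟩
    rw [hpre, List.mem_append, not_or]
    exact ⟨hbpre, hdisj b hb.2⟩
  | ext tr a u ars Ss hext hinc hars hlen hrec ih =>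
    have hu := hsg.1.cf_of_inc hinc hsrc
    -- each `TES` in the recursion is nonempty, so `ai` and `a` occur in a trail of the result
    have hmemAs : ∀ (i : ℕ) (ai : A), ars[i]? = some ai → ai ∈ As ∧ a ∈ As := by
      intro i ai hai
      obtain ⟨Si, hSi⟩ := List.exists_getElem?_eq_some_of_length_eq hlen.symm hai
      obtain ⟨si, hsi⟩ := hars.inc_of_getElem? hai
      obtain ⟨e, he⟩ := List.exists_mem_of_ne_nil _
        ((hrec i ai si Si hai hSi hsi).ne_nil_s11 hsg hins (hsg.1.tk_of_inc hsi hu))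
      have hw : (⟨e.arrows ++ [ai, a], e.src, tr.src⟩ : Trail V A) ∈ extensionSeq a tr.src ars Ss :=
        mem_extensionSeq.2 ⟨i, ai, Si, e, hai, hSi, he, rfl⟩
      exact ⟨hAs _ hw ai (by simp), hAs _ hw a (by simp)⟩
    obtain ⟨a₀, _, hars₀⟩ := List.exists_cons_of_ne_nil (hsg.inArrowSeq_ne_nil hins hu hars)
    have ha : a ∈ As := (hmemAs 0 a₀ (by simp [hars₀])).2
    have hars' : InArrowSeq (g.restrict Vs As) u ars := by
      refine ⟨hars.1, fun x => ?_, fun i x hx => ⟨hars.2.2 i x hx, (hmemAs i x hx).1⟩⟩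
      constructor
      · intro hx
        obtain ⟨i, hi⟩ := List.mem_iff_getElem?.1 hx
        obtain ⟨hxA, w, hw⟩ := (hars.2.1 x).1 hx
        have hxAs := (hmemAs i x hi).1
        exact ⟨⟨hxA, hxAs⟩, w, hw, hxAs⟩
      · rintro ⟨⟨hxA, -⟩, w, hw, -⟩
        exact (hars.2.1 x).2 ⟨hxA, w, hw⟩
    refine TES.ext _ a u ars Ss ⟨⟨hext.1, ha⟩, fun h => hext.2.1 (hpre ▸ List.mem_append_left _ h),
      u, hinc, ha⟩ ⟨hinc, ha⟩ hars' hlen fun i ai si Si hai hSi hsi => ?_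
    refine ih i ai si Si hai hSi hsi.1 (pre := ai :: a :: pre) (by simp [hpre])
      (hsg.1.tk_of_inc hsi.1 hu) fun w hw x hx => hAs ⟨w.arrows ++ [ai, a], w.src, tr.src⟩ ?_ x
        (by simp [hx])
    exact mem_extensionSeq.2 ⟨i, ai, Si, w, hai, hSi, hw, rfl⟩

theorem TES.trGraph_nil (hsg : IsStructureGraph Ty le C sig g)
    (hins : ∀ c ins out, (c, (ins, out)) ∈ sig → ins ≠ []) {tr : Trail V A}
    {T : List (Trail V A)} (hT : TES g tr T) (htr : IsTrailIn g tr) (hwf : WellFormed g tr) :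
    TES (trGraph g T) (Trail.nil tr.src) T := by
  refine hT.restrict hsg hins (As := trailArrowSet T) (suf := tr.arrows) ?_ (pre := []) rfl hwf.1
    (fun w hw x hx => ⟨w, hw, hx⟩) tr.src
  rintro x ⟨w, hw, hx⟩
  exact List.disjoint_of_nodup_append (hT.isTrailIn_append hsg htr hwf hw).1.1 hx

end TES

theorem IsCSpace.ins_ne_nil {Cs : CSpace V A L} (hCs : IsCSpace Cs) :
    ∀ c ins out, (c, (ins, out)) ∈ Cs.sig → ins ≠ [] :=
  fun c ins out h => (hCs.2.2.2.1 c ins out h).1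

section Decomposition

variable {Cs : CSpace V A L} {g g' : PreGraph V A L} {t : V}

/-- `F` is the foundation token-sequence `Ft(g, t)`, the sources of the trails of `CTS(g, t)`. -/
def IsFoundationSeq (g : PreGraph V A L) (t : V) (F : List V) : Prop :=
  ∃ S, TES g (Trail.nil t) S ∧ F = srcSeq S

theorem IsConstruction.isFoundationSeq_unique (hc : IsConstruction Cs g t) {F F' : List V}
    (hF : IsFoundationSeq g t F) (hF' : IsFoundationSeq g t F') : F = F' := by
  obtain ⟨-, hsg, -, -, -, huni, ht, -⟩ := hc
  obtain ⟨S, hS, rfl⟩ := hF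
  obtain ⟨S', hS', rfl⟩ := hF'
  rw [hS.unique hsg.1 huni ht hS']

theorem IsSplit.ne_nil_s11 (hCs : IsCSpace Cs) {ics : List (PreGraph V A L × V)}
    (hsplit : IsSplit Cs g t g' ics) : ics ≠ [] := by
  obtain ⟨⟨-, hsg', -, -, -, -, ht, -⟩, -, trs, htrs, hlen, -⟩ := hsplit
  rw [← List.length_pos_iff, hlen, List.length_pos_iff]
  exact htrs.ne_nil_s11 hsg' hCs.ins_ne_nil ht

theorem IsSplit.exists_isFoundationSeq (hCs : IsCSpace Cs) (hc : IsConstruction Cs g t)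
    {ics : List (PreGraph V A L × V)} (hsplit : IsSplit Cs g t g' ics) {F : List V}
    (hF : IsFoundationSeq g t F) :
    ∃ Fs, F = Fs.flatten ∧ List.Forall₂ (fun ic F => IsFoundationSeq ic.1 ic.2 F) ics Fs := by
  obtain ⟨-, hsg, -, -, -, huni, -, -⟩ := hc
  obtain ⟨⟨-, hsg', -, -, -, -, ht', -⟩, hsub, trs, htrs, hlen, hics⟩ := hsplit
  obtain ⟨S, hS, rfl⟩ := hF
  obtain ⟨Ts, hTs⟩ :
      ∃ Ts, List.Forall₂ (fun w T => TES g (w.append (Trail.nil t)) T) trs Ts := by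
    refine List.exists_forall₂_of_forall_mem fun tri htri => ?_
    obtain ⟨i, hi⟩ := List.mem_iff_getElem?.1 htri
    obtain ⟨T, hT, -⟩ := hics i tri hi
    exact ⟨T, by rwa [Trail.append_nil_of_tgt_eq (t := t) (htrs.tgt_eq htri)]⟩
  refine ⟨Ts.map srcSeq, htrs.srcSeq_eq_flatten hCs.2.2.1 hsg' hsg hsub huni ht' hS hTs,
    List.forall₂_of_getElem? (by simp [hlen, hTs.length_eq]) fun i ic F hic hF => ?_⟩
  rw [List.getElem?_map, Option.map_eq_some_iff] at hF
  obtain ⟨T, hT, rfl⟩ := hF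
  obtain ⟨tri, htri⟩ := List.exists_getElem?_eq_some_of_length_eq hTs.length_eq.symm hT
  obtain ⟨Si, hSi, hic'⟩ := hics i tri htri
  obtain rfl := Option.some.inj (hic.symm.trans hic')
  obtain ⟨htr, hwf, htgt⟩ := htrs.isTrailIn_of_mem_nil hsg' ht' (List.mem_of_getElem? htri)
  have hT := hTs.of_getElem? htri hT
  rw [Trail.append_nil_of_tgt_eq htgt] at hT
  obtain rfl := hSi.unique hsg.1 huni (hsub.1 hwf.1) hT
  exact ⟨Si, hSi.trGraph_nil hsg hCs.ins_ne_nil (htr.mono hsub) ⟨hsub.1 hwf.1, hsub.1 hwf.2⟩, rfl⟩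

theorem IsDecompositionOf.isFoundationSeq_eq_flatten (hCs : IsCSpace Cs) {D : DTree V A L}
    (hD : IsDecompositionOf Cs D g t) {F : List V} (hF : IsFoundationSeq g t F)
    {ls : List (PreGraph V A L × V)} (hl : LcsRel D ls) {Fts : List (List V)}
    (hFts : List.Forall₂ (fun p F => IsFoundationSeq p.1 p.2 F) ls Fts) : F = Fts.flatten := by
  induction hD generalizing F ls Fts with
  | single g t hc =>
    cases hl with
    | leaf =>
      obtain ⟨F', hF', rfl⟩ : ∃ F', IsFoundationSeq g t F' ∧ Fts = [F'] := by
        cases hFts with | cons h hnil => cases hnil; exact ⟨_, h, rfl⟩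
      simpa using hc.isFoundationSeq_unique hF hF'
    | node _ _ _ _ hne => exact absurd rfl hne
  | split g t g' ics cs hc hsplit hlen _ ih =>
    cases hl with
    | leaf => exact absurd (List.eq_nil_of_length_eq_zero hlen.symm) (hsplit.ne_nil_s11 hCs)
    | node _ _ _ lss _ hlenl hlss =>
      obtain ⟨Fs, rfl, hFs⟩ := hsplit.exists_isFoundationSeq hCs hc hF
      obtain ⟨Ftss, rfl, hFtss⟩ := List.exists_flatten_eq_of_forall₂_flatten hFts
      rw [List.flatten_flatten]
      congr 1
      refine List.ext_of_getElem?_eq ?_ fun i Fi y hFi hy => ?_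
      · simp [← hFs.length_eq, ← hlen, ← hlenl, hFtss.length_eq]
      rw [List.getElem?_map, Option.map_eq_some_iff] at hy
      obtain ⟨Fi', hFi', rfl⟩ := hy
      obtain ⟨ic, hic⟩ := List.exists_getElem?_eq_some_of_length_eq hFs.length_eq.symm hFi
      obtain ⟨ci, hci⟩ := List.exists_getElem?_eq_some_of_length_eq hlen.symm hic
      obtain ⟨lsi, hlsi⟩ := List.exists_getElem?_eq_some_of_length_eq hlenl.symm hci
      exact ih i ci ic.1 ic.2 hci hic (hFs.of_getElem? hic hFi) (hlss i ci lsi hci hlsi)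
        (hFtss.of_getElem? hlsi hFi')

end Decomposition

theorem decomposition_preserves_foundations_general {V A L : Type*}
    (Cs : CSpace V A L) (hCs : IsCSpace Cs)
    (g : PreGraph V A L) (t : V)
    (D : DTree V A L) (hD : IsDecompositionOf Cs D g t)
    (ls : List (PreGraph V A L × V)) (hl : LcsRel D ls)
    (S : List (Trail V A)) (hS : TES g (Trail.nil t) S)
    (Fts : List (List V)) (hlen : Fts.length = ls.length)
    (hFt : ∀ (i : ℕ) (gi : PreGraph V A L) (ti : V) (Fi : List V),
        ls[i]? = some (gi, ti) → Fts[i]? = some Fi →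
        ∃ Si, TES gi (Trail.nil ti) Si ∧ Fi = srcSeq Si) :
    srcSeq S = Fts.flatten :=
  hD.isFoundationSeq_eq_flatten hCs ⟨S, hS, rfl⟩ hl
    (List.forall₂_of_getElem? hlen.symm fun i p F hp hF => hFt i p.1 p.2 F hp hF)

/-- the foundation token-sequence of a construction is the concatenation of the
foundation token-sequences of the constructions in the leaf construction-sequence of any of
its decompositions. -/
theorem decomposition_preserves_foundations {V A L : Type*}
    (Cs : CSpace V A L) (hCs : IsCSpace Cs)
    (g : PreGraph V A L) (t : V) (hc : IsConstruction Cs g t)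
    (D : DTree V A L) (hD : IsDecompositionOf Cs D g t)
    (ls : List (PreGraph V A L × V)) (hl : LcsRel D ls)
    (S : List (Trail V A)) (hS : TES g (Trail.nil t) S)
    (Fts : List (List V)) (hlen : Fts.length = ls.length)
    (hFt : ∀ (i : ℕ) (gi : PreGraph V A L) (ti : V) (Fi : List V),
        ls[i]? = some (gi, ti) → Fts[i]? = some Fi →
        ∃ Si, TES gi (Trail.nil ti) Si ∧ Fi = srcSeq Si) :
    srcSeq S = Fts.flatten :=
  decomposition_preserves_foundations_general Cs hCs g t D hD ls hl S hS Fts hlen hFt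

end RST
end
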